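/- arXiv:1711.05043 — 7 statements merged into one kernel-verified Lean document; each statement's English description precedes it below -/
import Mathlib

section
/- Let X be a Hausdorff topological space, let J : S¹ → X be a topological embedding (a simple closed curve), and let A and B be disjoint compact subsets of X. Then there is a non-negative integer N such that every interlacing of points (A', B') with A' ⊆ A ∩ |J| and B' ⊆ B ∩ |J| satisfies |A'| ≤ N; consequently the interlacing number of (A, B) for J is a well-defined non-negative integer. -/
/-!
The curve `|J|` is compact and locally connected, so it is covered by finitely many connected
pieces, each missing `A` or `B`. A connected piece missing `A` lies in a single component of
`|J| \ A'`, hence contains at most one point of `B'`; so `|A'| = |B'|` is at most the number of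
pieces.
-/

open Set Topology

/-- The unit circle `S¹ = {z ∈ ℂ : |z| = 1}`, as a subset of `ℂ`. -/
def unitCircleSet : Set ℂ := Metric.sphere 0 1

/-- `(A', B')` is a `k`-interlacing of points in the set `C` (a simple closed curve):
`A'` and `B'` are disjoint finite subsets of `C` of cardinality `k ≥ 1`, and every
connected component of `C \ A'` contains exactly one point of `B'`. -/
def IsPointInterlacing {X : Type*} [TopologicalSpace X] (C A' B' : Set X) (k : ℕ) : Prop :=
  1 ≤ k ∧ A' ⊆ C ∧ B' ⊆ C ∧ Disjoint A' B' ∧ A'.Finite ∧ B'.Finite ∧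
    A'.ncard = k ∧ B'.ncard = k ∧
    ∀ x ∈ C \ A', ∃! b, b ∈ B' ∧ b ∈ connectedComponentIn (C \ A') x

instance : CompactSpace ↥unitCircleSet := Metric.sphere.compactSpace 0 1

instance : LocallyConnectedSpace ↥unitCircleSet :=
  haveI : LocallyPathConnectedSpace (AddCircle (2 * Real.pi)) :=
    Quotient.locallyPathConnectedSpace
  AddCircle.homeomorphCircle'.symm.locallyConnectedSpace

theorem exists_finset_isPreconnected_cover {Y : Type*} [TopologicalSpace Y] [CompactSpace Y]
    [LocallyConnectedSpace Y] {P : Set Y → Prop} (hP_anti : ∀ ⦃s t⦄, s ⊆ t → P t → P s)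
    (hP : ∀ y, ∃ V ∈ 𝓝 y, P V) :
    ∃ t : Finset (Set Y), univ ⊆ ⋃₀ (t : Set (Set Y)) ∧ ∀ s ∈ t, IsPreconnected s ∧ P s := by
  choose V hV_nhds hPV using hP
  obtain ⟨u, -, hu⟩ := isCompact_univ.elim_nhds_subcover (fun y ↦ connectedComponentIn (V y) y)
    fun y _ ↦ connectedComponentIn_mem_nhds (hV_nhds y)
  refine ⟨u.image fun y ↦ connectedComponentIn (V y) y, ?_, ?_⟩
  · simpa [sUnion_image] using hu
  · simp only [Finset.mem_image]
    rintro _ ⟨y, -, rfl⟩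
    exact ⟨isPreconnected_connectedComponentIn, hP_anti (connectedComponentIn_subset _ _) (hPV y)⟩

theorem IsCompact.exists_finset_isPreconnected_cover {X : Type*} [TopologicalSpace X] {C : Set X}
    (hC : IsCompact C) [LocallyConnectedSpace C] {P : Set X → Prop}
    (hP_anti : ∀ ⦃s t⦄, s ⊆ t → P t → P s) (hP : ∀ x ∈ C, ∃ V ∈ 𝓝 x, P V) :
    ∃ t : Finset (Set X), C ⊆ ⋃₀ (t : Set (Set X)) ∧ ∀ s ∈ t, IsPreconnected s ∧ s ⊆ C ∧ P s := by
  have := isCompact_iff_compactSpace.mp hC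
  obtain ⟨t, hcov, ht⟩ := _root_.exists_finset_isPreconnected_cover
    (P := fun s : Set C ↦ P (Subtype.val '' s))
    (fun _ _ hst ↦ hP_anti (image_mono hst)) fun x ↦ by
      obtain ⟨V, hV, hPV⟩ := hP x x.2
      exact ⟨Subtype.val ⁻¹' V, continuous_subtype_val.continuousAt.preimage_mem_nhds hV,
        hP_anti (image_preimage_subset _ _) hPV⟩
  refine ⟨t.image (Subtype.val '' ·), fun x hx ↦ ?_, ?_⟩
  · obtain ⟨s, hs, hxs⟩ := hcov (mem_univ ⟨x, hx⟩)
    exact ⟨_, Finset.mem_image_of_mem _ hs, mem_image_of_mem _ hxs⟩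
  · simp only [Finset.mem_image]
    rintro _ ⟨s, hs, rfl⟩
    exact ⟨(ht s hs).1.image _ continuous_subtype_val.continuousOn, Subtype.coe_image_subset _ _,
      (ht s hs).2⟩

theorem Set.ncard_le_card_of_subsingleton_inter {α : Type*} {s : Set α} (t : Finset (Set α))
    (hs : s ⊆ ⋃₀ (t : Set (Set α))) (ht : ∀ u ∈ t, (u ∩ s).Subsingleton) : s.ncard ≤ t.card := by
  have hs' : ∀ a ∈ s, ∃ u ∈ t, a ∈ u := fun a ha ↦ by simpa using hs ha
  choose! g hgt hg using hs'
  calc s.ncard ≤ (t : Set (Set α)).ncard :=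
        ncard_le_ncard_of_injOn g (fun a ha ↦ Finset.mem_coe.mpr (hgt a ha)) fun a ha b hb hab ↦
          ht (g a) (hgt a ha) ⟨hg a ha, ha⟩ ⟨hab ▸ hg b hb, hb⟩
    _ = t.card := ncard_coe_finset t

namespace IsPointInterlacing

variable {X : Type*} [TopologicalSpace X] {C A' B' : Set X} {k : ℕ}

theorem subsingleton_inter_of_isPreconnected (h : IsPointInterlacing C A' B' k) {S : Set X}
    (hS : IsPreconnected S) (hSC : S ⊆ C \ A') : (S ∩ B').Subsingleton := by
  rintro b₁ ⟨hb₁S, hb₁⟩ b₂ ⟨hb₂S, hb₂⟩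
  obtain ⟨-, -, -, -, -, -, -, -, h_unique⟩ := h
  obtain ⟨b, -, hb⟩ := h_unique b₁ (hSC hb₁S)
  have hS_sub : S ⊆ connectedComponentIn (C \ A') b₁ := hS.subset_connectedComponentIn hb₁S hSC
  exact (hb b₁ ⟨hb₁, mem_connectedComponentIn (hSC hb₁S)⟩).trans
    (hb b₂ ⟨hb₂, hS_sub hb₂S⟩).symm

theorem ncard_le_card_of_cover (h : IsPointInterlacing C A' B' k) (t : Finset (Set X))
    (hcov : C ⊆ ⋃₀ (t : Set (Set X)))
    (ht : ∀ s ∈ t, IsPreconnected s ∧ s ⊆ C ∧ (Disjoint s A' ∨ Disjoint s B')) :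
    A'.ncard ≤ t.card := by
  obtain ⟨-, -, hB'C, -, -, -, hA'k, hB'k, -⟩ := id h
  rw [hA'k, ← hB'k]
  refine ncard_le_card_of_subsingleton_inter t (hB'C.trans hcov) fun s hs ↦ ?_
  obtain ⟨hs_pre, hsC, hsA' | hsB'⟩ := ht s hs
  · exact h.subsingleton_inter_of_isPreconnected hs_pre fun x hx ↦
      ⟨hsC hx, hsA'.notMem_of_mem_left hx⟩
  · simp [hsB'.inter_eq]

end IsPointInterlacing

/-- **Interlacing Theorem for a Simple Closed Curve** (boundedness part): if `A` and `B`
are disjoint compact subsets of a Hausdorff space `X` and `J : S¹ → X` is an embedding,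
then there is `N : ℕ` bounding the cardinality of every interlacing of points `(A', B')`
with `A' ⊆ A ∩ |J|` and `B' ⊆ B ∩ |J|`; hence the interlacing number of `(A, B)` for `J`
is a well-defined non-negative integer. -/
theorem interlacing_number_well_defined {X : Type*} [TopologicalSpace X] [T2Space X]
    (J : ↥unitCircleSet → X) (hJ : Topology.IsEmbedding J)
    (A B : Set X) (hA : IsCompact A) (hB : IsCompact B) (hAB : Disjoint A B) :
    ∃ N : ℕ, ∀ (k : ℕ) (A' B' : Set X),
      A' ⊆ A ∩ Set.range J → B' ⊆ B ∩ Set.range J →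
      IsPointInterlacing (Set.range J) A' B' k → A'.ncard ≤ N := by
  have : LocallyConnectedSpace (range J) := hJ.toHomeomorph.symm.locallyConnectedSpace
  obtain ⟨t, hcov, ht⟩ := (isCompact_range hJ.continuous).exists_finset_isPreconnected_cover
    (P := fun s ↦ Disjoint s A ∨ Disjoint s B)
    (fun _ _ hst ↦ Or.imp (·.mono_left hst) (·.mono_left hst)) fun x _ ↦ by
      by_cases hxA : x ∈ A
      · exact ⟨Bᶜ, hB.isClosed.compl_mem_nhds (hAB.notMem_of_mem_left hxA),
          .inr disjoint_compl_left⟩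
      · exact ⟨Aᶜ, hA.isClosed.compl_mem_nhds hxA, .inl disjoint_compl_left⟩
  refine ⟨t.card, fun k A' B' hA' hB' h ↦ h.ncard_le_card_of_cover t hcov fun s hs ↦ ?_⟩
  obtain ⟨hs_pre, hsC, hs_disj⟩ := ht s hs
  exact ⟨hs_pre, hsC, hs_disj.imp (·.mono_right fun _ ha ↦ (hA' ha).1)
    (·.mono_right fun _ hb ↦ (hB' hb).1)⟩
end

section
/- Let X be a Hausdorff topological space, let J : S¹ → X be a topological embedding, and let A and B be disjoint compact subsets of X whose interlacing number for J is k. Then there exist sets U and V, open in the subspace |J| = J(S¹), with A ∩ |J| ⊆ U and B ∩ |J| ⊆ V, such that for all disjoint compact sets Ã, B̃ ⊆ X with A ∩ |J| ⊆ Ã ∩ |J| ⊆ U and B ∩ |J| ⊆ B̃ ∩ |J| ⊆ V, the interlacing number of (Ã, B̃) for J is also k. -/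
open Set Topology

/-- The interlacing number of `(A, B)` for the simple closed curve with image `C`:
the largest `k ≥ 1` for which there are finite subsets `A' ⊆ A ∩ C` and `B' ⊆ B ∩ C`
forming a `k`-interlacing of points in `C`, and `0` if no such `k` exists. -/
noncomputable def interlacingNumber {X : Type*} [TopologicalSpace X] (C A B : Set X) : ℕ :=
  sSup {k : ℕ | ∃ A' B' : Set X, A' ⊆ A ∩ C ∧ B' ⊆ B ∩ C ∧ IsPointInterlacing C A' B' k}

/-!
On the circle `𝕋 = ℝ/ℤ`, the connected components of the complement of `n` points are the `n`
open arcs between cyclically consecutive points. Hence an `n`-interlacing is the same thing as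
lifts `f 0 < g 0 < f 1 < ⋯ < f (n - 1) < g (n - 1) < f 0 + 1` of its points: only their cyclic
order matters. Take as neighbourhoods the `δ`-thickenings of `A` and `B`, with `δ > 0` so small
that they are disjoint. Lifts of points of `A` and of `B` are then `2δ` apart, so replacing each
point of an interlacing inside the thickenings by a point of `A` or `B` at distance `< δ` keeps
the cyclic order. Thus the thickenings realise no interlacing cardinality that `A` and `B` do not
realise, and neither does any pair squeezed in between. Pulling back along `J` reduces the
theorem to this statement on `𝕋`.
-/

open Metric Function

local notation "𝕋" => UnitAddCircle

section Interlacing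

variable {X Y : Type*} [TopologicalSpace X] [TopologicalSpace Y]

def interlacingCards (C A B : Set X) : Set ℕ :=
  {k | ∃ A' B' : Set X, A' ⊆ A ∩ C ∧ B' ⊆ B ∩ C ∧ IsPointInterlacing C A' B' k}

theorem interlacingNumber_eq_sSup (C A B : Set X) :
    interlacingNumber C A B = sSup (interlacingCards C A B) := rfl

theorem interlacingCards_mono {C A B A₁ B₁ : Set X} (hA : A ∩ C ⊆ A₁ ∩ C)
    (hB : B ∩ C ⊆ B₁ ∩ C) : interlacingCards C A B ⊆ interlacingCards C A₁ B₁ := by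
  rintro k ⟨A', B', hA', hB', h⟩
  exact ⟨A', B', hA'.trans hA, hB'.trans hB, h⟩

theorem Function.Injective.existsUnique_mem_image_iff {α β : Type*} {f : α → β}
    (hf : Injective f) {s : Set α} : (∃! b, b ∈ f '' s) ↔ ∃! a, a ∈ s := by
  constructor
  · rintro ⟨_, ⟨a, ha, rfl⟩, hu⟩
    exact ⟨a, ha, fun a' ha' => hf (hu _ (mem_image_of_mem f ha'))⟩
  · rintro ⟨a, ha, hu⟩
    exact ⟨f a, mem_image_of_mem f ha, by rintro _ ⟨a', ha', rfl⟩; rw [hu a' ha']⟩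

theorem Topology.IsEmbedding.connectedComponentIn_image {f : Y → X} (hf : IsEmbedding f)
    {s : Set Y} {y : Y} (hy : y ∈ s) :
    connectedComponentIn (f '' s) (f y) = f '' connectedComponentIn s y := by
  refine Subset.antisymm ?_ (hf.continuous.continuousOn.image_connectedComponentIn_subset hy)
  set T := connectedComponentIn (f '' s) (f y)
  have hTs : T ⊆ f '' s := connectedComponentIn_subset _ _
  have hT : f '' (f ⁻¹' T) = T :=
    image_preimage_eq_of_subset (hTs.trans (image_subset_range _ _))
  have hpre : IsPreconnected (f ⁻¹' T) :=
    hf.isInducing.isPreconnected_image.mp (by rw [hT]; exact isPreconnected_connectedComponentIn)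
  have hpre_s : f ⁻¹' T ⊆ s := by
    rw [← hf.injective.preimage_image s]
    exact preimage_mono hTs
  rw [← hT]
  exact image_mono (hpre.subset_connectedComponentIn
    (mem_connectedComponentIn (mem_image_of_mem f hy)) hpre_s)

theorem Topology.IsEmbedding.isPointInterlacing_image_iff {f : Y → X} (hf : IsEmbedding f)
    {A' B' : Set Y} {k : ℕ} :
    IsPointInterlacing (range f) (f '' A') (f '' B') k ↔ IsPointInterlacing univ A' B' k := by
  have hcompl : range f \ f '' A' = f '' (univ \ A') := by
    rw [image_sdiff hf.injective, image_univ]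
  have hclause :
      (∀ x ∈ range f \ f '' A',
          ∃! b, b ∈ f '' B' ∧ b ∈ connectedComponentIn (range f \ f '' A') x) ↔
        ∀ y ∈ univ \ A', ∃! c, c ∈ B' ∧ c ∈ connectedComponentIn (univ \ A') y := by
    rw [hcompl, forall_mem_image]
    refine forall₂_congr fun y hy => ?_
    rw [hf.connectedComponentIn_image hy]
    simp only [← mem_inter_iff, ← image_inter hf.injective]
    exact hf.injective.existsUnique_mem_image_iff
  simp only [IsPointInterlacing, hclause, image_subset_range, subset_univ, true_and,
    disjoint_image_iff hf.injective, finite_image_iff hf.injective.injOn,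
    ncard_image_of_injective _ hf.injective]

theorem Topology.IsEmbedding.interlacingCards_range {f : Y → X} (hf : IsEmbedding f)
    (A B : Set X) :
    interlacingCards (range f) A B = interlacingCards univ (f ⁻¹' A) (f ⁻¹' B) := by
  ext k
  constructor
  · rintro ⟨A', B', hA', hB', h⟩
    have hA'f : f '' (f ⁻¹' A') = A' :=
      image_preimage_eq_of_subset (hA'.trans inter_subset_right)
    have hB'f : f '' (f ⁻¹' B') = B' :=
      image_preimage_eq_of_subset (hB'.trans inter_subset_right)
    refine ⟨f ⁻¹' A', f ⁻¹' B', fun y hy => ⟨(hA' hy).1, mem_univ y⟩,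
      fun y hy => ⟨(hB' hy).1, mem_univ y⟩, ?_⟩
    rwa [← hf.isPointInterlacing_image_iff, hA'f, hB'f]
  · rintro ⟨A', B', hA', hB', h⟩
    exact ⟨f '' A', f '' B', image_subset_iff.2 fun y hy => ⟨(hA' hy).1, mem_range_self y⟩,
      image_subset_iff.2 fun y hy => ⟨(hB' hy).1, mem_range_self y⟩,
      hf.isPointInterlacing_image_iff.2 h⟩

theorem Topology.IsEmbedding.isOpen_val_preimage_image {f : Y → X} (hf : IsEmbedding f)
    {U : Set Y} (hU : IsOpen U) : IsOpen (Subtype.val ⁻¹' (f '' U) : Set (range f)) := by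
  have : (Subtype.val ⁻¹' (f '' U) : Set (range f)) = hf.toHomeomorph '' U := by
    ext ⟨x, hx⟩
    simp [Subtype.ext_iff]
  rw [this]
  exact hf.toHomeomorph.isOpenMap U hU

end Interlacing

section CyclicSequence

variable {n : ℕ} [NeZero n]

def cyclicNext (f : Fin n → ℝ) (i : Fin n) : ℝ :=
  if h : (i : ℕ) + 1 < n then f ⟨i + 1, h⟩ else f 0 + 1

def IsCyclicallyIncreasing (f : Fin n → ℝ) : Prop :=
  ∀ i, f i < cyclicNext f i

def IsCyclicInterleaving (f g : Fin n → ℝ) : Prop :=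
  ∀ i, f i < g i ∧ g i < cyclicNext f i

def cyclicGap (f : Fin n → ℝ) (i : Fin n) : Set 𝕋 :=
  (↑) '' Ioo (f i) (cyclicNext f i)

theorem cyclicNext_le_of_lt {f : Fin n → ℝ} (hf : Monotone f) {i j : Fin n} (hij : i < j) :
    cyclicNext f i ≤ f j := by
  have h : (i : ℕ) + 1 < n := by omega
  rw [cyclicNext, dif_pos h]
  exact hf (Fin.mk_le_of_le_val (by omega))

theorem exists_coe_eq_coe_cyclicNext (f : Fin n → ℝ) (i : Fin n) :
    ∃ j, (f j : 𝕋) = cyclicNext f i := by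
  unfold cyclicNext
  split_ifs
  exacts [⟨_, rfl⟩, ⟨0, (AddCircle.coe_add_period 1 (f 0)).symm⟩]

theorem abs_cyclicNext_sub_lt {f f' : Fin n → ℝ} {δ : ℝ} (h : ∀ i, |f' i - f i| < δ)
    (i : Fin n) : |cyclicNext f' i - cyclicNext f i| < δ := by
  unfold cyclicNext
  split_ifs
  exacts [h _, by simpa using h 0]

theorem exists_mem_cyclicGap {f : Fin n → ℝ} {x : 𝕋}
    (hx : x ∉ range fun j => (f j : 𝕋)) : ∃ i, x ∈ cyclicGap f i := by
  classical
  obtain ⟨t, ht, rfl⟩ : x ∈ ((↑) : ℝ → 𝕋) '' Ico (f 0) (f 0 + 1) := by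
    rw [AddCircle.coe_image_Ico_eq]; trivial
  have hft : ∀ j, f j ≠ t := fun j h => hx ⟨j, congrArg _ h⟩
  set below := Finset.univ.filter fun j => f j < t
  have hbelow : below.Nonempty := ⟨0, by simpa [below] using lt_of_le_of_ne ht.1 (hft 0)⟩
  set i := below.max' hbelow
  have hi : f i < t := (Finset.mem_filter.1 (below.max'_mem hbelow)).2
  refine ⟨i, t, ⟨hi, ?_⟩, rfl⟩
  unfold cyclicNext
  split_ifs with h
  · by_contra! hle
    have : (⟨i + 1, h⟩ : Fin n) ≤ i :=
      below.le_max' _ (by simpa [below] using lt_of_le_of_ne hle (hft _))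
    exact absurd this (by simp [Fin.le_def])
  · exact ht.2

namespace IsCyclicallyIncreasing

variable {f : Fin n → ℝ}

theorem strictMono (hf : IsCyclicallyIncreasing f) : StrictMono f := by
  obtain ⟨m, rfl⟩ := Nat.exists_eq_succ_of_ne_zero (NeZero.ne n)
  refine Fin.strictMono_iff_lt_succ.2 fun i => ?_
  simpa [cyclicNext, Fin.succ] using hf i.castSucc

theorem lt_zero_add_one (hf : IsCyclicallyIncreasing f) (i : Fin n) : f i < f 0 + 1 := by
  have hn := NeZero.pos n
  have hlast := hf ⟨n - 1, by omega⟩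
  rw [cyclicNext, dif_neg (by simp; omega)] at hlast
  have hi : i ≤ ⟨n - 1, by omega⟩ := Fin.mk_le_of_le_val (by simp; omega)
  exact (hf.strictMono.monotone hi).trans_lt hlast

theorem mem_Ico (hf : IsCyclicallyIncreasing f) (i : Fin n) : f i ∈ Ico (f 0) (f 0 + 1) :=
  ⟨hf.strictMono.monotone (Fin.zero_le i), hf.lt_zero_add_one i⟩

theorem Ioo_subset (hf : IsCyclicallyIncreasing f) (i : Fin n) :
    Ioo (f i) (cyclicNext f i) ⊆ Ico (f 0) (f 0 + 1) := by
  refine Ioo_subset_Ico_self.trans (Ico_subset_Ico (hf.mem_Ico i).1 ?_)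
  unfold cyclicNext
  split_ifs
  exacts [(hf.lt_zero_add_one _).le, le_rfl]

theorem coe_injective (hf : IsCyclicallyIncreasing f) :
    Injective fun i => (f i : 𝕋) := fun i j h =>
  hf.strictMono.injective ((AddCircle.coe_eq_coe_iff_of_mem_Ico (hf.mem_Ico i) (hf.mem_Ico j)).1 h)

theorem disjoint_cyclicGap_range (hf : IsCyclicallyIncreasing f) (i : Fin n) :
    Disjoint (cyclicGap f i) (range fun j => (f j : 𝕋)) := by
  rw [disjoint_iff_forall_ne]
  rintro _ ⟨t, ht, rfl⟩ _ ⟨j, rfl⟩ h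
  obtain rfl := (AddCircle.coe_eq_coe_iff_of_mem_Ico (hf.Ioo_subset i ht) (hf.mem_Ico j)).1 h
  rcases le_or_gt j i with hji | hij
  · exact ht.1.not_ge (hf.strictMono.monotone hji)
  · exact ht.2.not_ge (cyclicNext_le_of_lt hf.strictMono.monotone hij)

theorem disjoint_cyclicGap (hf : IsCyclicallyIncreasing f) {i j : Fin n} (hij : i ≠ j) :
    Disjoint (cyclicGap f i) (cyclicGap f j) := by
  have key : ∀ {i j : Fin n}, i < j → Disjoint (cyclicGap f i) (cyclicGap f j) := by
    intro i j hij
    rw [disjoint_iff_forall_ne]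
    rintro _ ⟨s, hs, rfl⟩ _ ⟨t, ht, rfl⟩ h
    obtain rfl :=
      (AddCircle.coe_eq_coe_iff_of_mem_Ico (hf.Ioo_subset i hs) (hf.Ioo_subset j ht)).1 h
    linarith [hs.2, ht.1, cyclicNext_le_of_lt hf.strictMono.monotone hij]
  rcases hij.lt_or_gt with h | h
  exacts [key h, (key h).symm]

theorem connectedComponentIn_eq (hf : IsCyclicallyIncreasing f) {i : Fin n} {x : 𝕋}
    (hx : x ∈ cyclicGap f i) :
    connectedComponentIn (univ \ range fun j => (f j : 𝕋)) x = cyclicGap f i := by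
  have hopen : ∀ j, IsOpen (cyclicGap f j) := fun j => QuotientAddGroup.isOpenMap_coe _ isOpen_Ioo
  have hsub : cyclicGap f i ⊆ univ \ range fun j => (f j : 𝕋) :=
    fun y hy => ⟨mem_univ y, (hf.disjoint_cyclicGap_range i).notMem_of_mem_left hy⟩
  refine Subset.antisymm ?_ ((isPreconnected_Ioo.image _
    continuous_quotient_mk'.continuousOn).subset_connectedComponentIn hx hsub)
  refine isPreconnected_connectedComponentIn.subset_left_of_subset_union (hopen i)
    (isOpen_biUnion fun j (_ : j ≠ i) => hopen j)
    (disjoint_iUnion₂_right.2 fun j hj => hf.disjoint_cyclicGap (Ne.symm hj)) ?_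
    ⟨x, mem_connectedComponentIn (hsub hx), hx⟩
  intro y hy
  obtain ⟨j, hj⟩ := exists_mem_cyclicGap (connectedComponentIn_subset _ _ hy).2
  by_cases hji : j = i
  · exact Or.inl (hji ▸ hj)
  · exact Or.inr (mem_iUnion₂.2 ⟨j, hji, hj⟩)

end IsCyclicallyIncreasing

end CyclicSequence

section CircleInterlacing

theorem exists_strictMono_range_coe {n : ℕ} {A : Set 𝕋} (hfin : A.Finite)
    (hcard : A.ncard = n) :
    ∃ f : Fin n → ℝ, StrictMono f ∧ (∀ i, f i ∈ Ico 0 1) ∧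
      range (fun i => (f i : 𝕋)) = A := by
  let lift : 𝕋 → ℝ := fun q => (AddCircle.equivIco 1 0 q : ℝ)
  have hlift : ∀ q, (lift q : 𝕋) = q := (AddCircle.equivIco 1 0).symm_apply_apply
  have hlift_inj : Injective lift := Subtype.val_injective.comp (AddCircle.equivIco 1 0).injective
  let s := hfin.toFinset.image lift
  have hs : s.card = n := by
    rw [Finset.card_image_of_injective _ hlift_inj, ← ncard_eq_toFinset_card _ hfin, hcard]
  refine ⟨s.orderEmbOfFin hs, (s.orderEmbOfFin hs).strictMono, fun i => ?_, ?_⟩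
  · obtain ⟨q, -, hq⟩ := Finset.mem_image.1 (s.orderEmbOfFin_mem hs i)
    rw [← hq]
    simpa using (AddCircle.equivIco 1 0 q).2
  · rw [range_comp' ((↑) : ℝ → 𝕋) (s.orderEmbOfFin hs), Finset.range_orderEmbOfFin,
      Finset.coe_image, image_image]
    simp only [hlift, image_id', Finite.coe_toFinset]

variable {n : ℕ} [NeZero n]

theorem IsCyclicInterleaving.isPointInterlacing {f g : Fin n → ℝ}
    (h : IsCyclicInterleaving f g) :
    IsPointInterlacing univ (range fun i => (f i : 𝕋)) (range fun i => (g i : 𝕋)) n := by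
  have hf : IsCyclicallyIncreasing f := fun i => (h i).1.trans (h i).2
  have hg : ∀ i, (g i : 𝕋) ∈ cyclicGap f i := fun i => ⟨g i, h i, rfl⟩
  have hg_gap : ∀ {i j}, (g i : 𝕋) ∈ cyclicGap f j → i = j := fun hij =>
    by_contra fun hne => (hf.disjoint_cyclicGap hne).notMem_of_mem_left (hg _) hij
  have hg_inj : Injective fun i => (g i : 𝕋) := fun i j hij => hg_gap (by simpa [hij] using hg j)
  refine ⟨NeZero.one_le, subset_univ _, subset_univ _, ?_, finite_range _, finite_range _,
    by rw [ncard_range_of_injective hf.coe_injective, Nat.card_fin],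
    by rw [ncard_range_of_injective hg_inj, Nat.card_fin], ?_⟩
  · rw [disjoint_comm, disjoint_left]
    rintro _ ⟨i, rfl⟩
    exact (hf.disjoint_cyclicGap_range i).notMem_of_mem_left (hg i)
  · rintro x ⟨-, hx⟩
    obtain ⟨i, hi⟩ := exists_mem_cyclicGap hx
    rw [hf.connectedComponentIn_eq hi]
    exact ⟨g i, ⟨⟨i, rfl⟩, hg i⟩, by rintro _ ⟨⟨j, rfl⟩, hj⟩; rw [hg_gap hj]⟩

theorem exists_isCyclicInterleaving_of_isPointInterlacing {A' B' : Set 𝕋}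
    (h : IsPointInterlacing univ A' B' n) :
    ∃ f g : Fin n → ℝ, IsCyclicInterleaving f g ∧ range (fun i => (f i : 𝕋)) = A' ∧
      range (fun i => (g i : 𝕋)) = B' := by
  obtain ⟨-, -, -, hAB, hAfin, -, hAcard, -, hclause⟩ := h
  obtain ⟨f, hmono, hIco, rfl⟩ := exists_strictMono_range_coe hAfin hAcard
  have hf : IsCyclicallyIncreasing f := fun i => by
    unfold cyclicNext
    split_ifs
    · exact hmono (Fin.mk_lt_of_lt_val (by simp))
    · linarith [(hIco i).2, (hIco 0).1]
  have hgap : ∀ i, ∃! b, b ∈ B' ∧ b ∈ cyclicGap f i := fun i => by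
    have hx : (((f i + cyclicNext f i) / 2 : ℝ) : 𝕋) ∈ cyclicGap f i :=
      ⟨_, ⟨by linarith [hf i], by linarith [hf i]⟩, rfl⟩
    have := hclause _ ⟨mem_univ _, (hf.disjoint_cyclicGap_range i).notMem_of_mem_left hx⟩
    rwa [hf.connectedComponentIn_eq hx] at this
  choose b hb using fun i => (hgap i).exists
  choose g hg hgb using fun i => (hb i).2
  refine ⟨f, g, hg, rfl, Subset.antisymm ?_ fun y hy => ?_⟩
  · rintro _ ⟨i, rfl⟩
    simpa only [hgb] using (hb i).1
  · obtain ⟨i, hi⟩ := exists_mem_cyclicGap (hAB.notMem_of_mem_right hy)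
    exact ⟨i, (hgb i).trans ((hgap i).unique (hb i) ⟨hy, hi⟩)⟩

end CircleInterlacing

section Stability

theorem UnitAddCircle.dist_coe_le (x y : ℝ) : dist (x : 𝕋) y ≤ |x - y| := by
  rw [dist_eq_norm, ← AddCircle.coe_sub]
  exact QuotientAddGroup.norm_mk_le_norm

theorem UnitAddCircle.exists_coe_mem_abs_sub_lt {A : Set 𝕋} {δ x : ℝ}
    (hx : (x : 𝕋) ∈ thickening δ A) : ∃ y : ℝ, (y : 𝕋) ∈ A ∧ |y - x| < δ := by
  obtain ⟨a, ha, hxa⟩ := mem_thickening_iff.1 hx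
  obtain ⟨s, rfl⟩ := QuotientAddGroup.mk_surjective a
  rw [dist_eq_norm, ← AddCircle.coe_sub, UnitAddCircle.norm_eq] at hxa
  refine ⟨s + round (x - s), ?_, ?_⟩
  · simpa using ha
  · rw [abs_sub_comm]
    convert hxa using 2
    ring

theorem UnitAddCircle.two_mul_le_abs_sub_of_disjoint_thickening {A B : Set 𝕋} {δ : ℝ}
    (h : Disjoint (thickening δ A) (thickening δ B)) {s t : ℝ} (hs : (s : 𝕋) ∈ A)
    (ht : (t : 𝕋) ∈ B) : 2 * δ ≤ |s - t| := by
  by_contra! hst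
  have hm : ∀ u v : ℝ, |u - v| < 2 * δ → dist (((u + v) / 2 : ℝ) : 𝕋) u < δ :=
    fun u v huv => (dist_coe_le _ _).trans_lt <| by
      rw [show (u + v) / 2 - u = -((u - v) / 2) by ring, abs_neg, abs_div, abs_two]
      linarith
  refine disjoint_left.1 h (mem_thickening_iff.2 ⟨_, hs, hm s t hst⟩)
    (mem_thickening_iff.2 ⟨_, ht, ?_⟩)
  rw [add_comm]
  exact hm t s (abs_sub_comm s t ▸ hst)

theorem lt_of_abs_sub_lt_of_two_mul_le {s t s' t' δ : ℝ} (hst : s < t) (hs : |s' - s| < δ)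
    (ht : |t' - t| < δ) (hsep : 2 * δ ≤ |s' - t'|) : s' < t' := by
  by_contra! h
  rw [abs_of_nonneg (sub_nonneg.2 h)] at hsep
  linarith [(abs_lt.1 hs).2, (abs_lt.1 ht).1]

theorem IsCyclicInterleaving.of_abs_sub_lt {n : ℕ} [NeZero n] {f g f' g' : Fin n → ℝ}
    (h : IsCyclicInterleaving f g) {A B : Set 𝕋} {δ : ℝ}
    (hsep : ∀ s t : ℝ, (s : 𝕋) ∈ A → (t : 𝕋) ∈ B → 2 * δ ≤ |s - t|)
    (hf'A : ∀ i, (f' i : 𝕋) ∈ A) (hg'B : ∀ i, (g' i : 𝕋) ∈ B)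
    (hf : ∀ i, |f' i - f i| < δ) (hg : ∀ i, |g' i - g i| < δ) :
    IsCyclicInterleaving f' g' := by
  intro i
  obtain ⟨j, hj⟩ := exists_coe_eq_coe_cyclicNext f' i
  refine ⟨lt_of_abs_sub_lt_of_two_mul_le (h i).1 (hf i) (hg i) (hsep _ _ (hf'A i) (hg'B i)),
    lt_of_abs_sub_lt_of_two_mul_le (h i).2 (hg i) (abs_cyclicNext_sub_lt hf i) ?_⟩
  rw [abs_sub_comm]
  exact hsep _ _ (hj ▸ hf'A j) (hg'B i)

theorem UnitAddCircle.exists_isOpen_interlacingCards_subset {A B : Set 𝕋}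
    (hA : IsClosed A) (hB : IsClosed B) (hAB : Disjoint A B) :
    ∃ U V : Set 𝕋, IsOpen U ∧ IsOpen V ∧ A ⊆ U ∧ B ⊆ V ∧
      interlacingCards univ U V ⊆ interlacingCards univ A B := by
  obtain ⟨δ, hδ, hdisj⟩ := hAB.exists_thickenings hA.isCompact hB
  refine ⟨thickening δ A, thickening δ B, isOpen_thickening, isOpen_thickening,
    self_subset_thickening hδ A, self_subset_thickening hδ B, ?_⟩
  rintro n ⟨A', B', hA', hB', h⟩
  have : NeZero n := NeZero.of_pos h.1
  obtain ⟨f, g, hfg, rfl, rfl⟩ := exists_isCyclicInterleaving_of_isPointInterlacing h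
  choose f' hf'A hf' using fun i => exists_coe_mem_abs_sub_lt (hA' ⟨i, rfl⟩).1
  choose g' hg'B hg' using fun i => exists_coe_mem_abs_sub_lt (hB' ⟨i, rfl⟩).1
  refine ⟨_, _, range_subset_iff.2 fun i => ⟨hf'A i, mem_univ _⟩,
    range_subset_iff.2 fun i => ⟨hg'B i, mem_univ _⟩, ?_⟩
  exact (hfg.of_abs_sub_lt (fun _ _ => two_mul_le_abs_sub_of_disjoint_thickening hdisj)
    hf'A hg'B hf' hg').isPointInterlacing

end Stability

-- `Circle` is definitionally the subtype `unitCircleSet` of `ℂ`.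
noncomputable def unitAddCircleHomeomorph : 𝕋 ≃ₜ unitCircleSet :=
  AddCircle.homeomorphCircle one_ne_zero

/-- **Neighborhood Interlacing Theorem for Simple Closed Curves**: if `(A, B)` is a
`k`-interlacing for the simple closed curve `J`, then there are neighborhoods `U` of
`A ∩ |J|` and `V` of `B ∩ |J|`, open in `|J|`, such that any disjoint compact sets
`Ã`, `B̃` with `A ∩ |J| ⊆ Ã ∩ |J| ⊆ U` and `B ∩ |J| ⊆ B̃ ∩ |J| ⊆ V` also form a
`k`-interlacing for `J`. -/
theorem neighborhood_interlacing {X : Type*} [TopologicalSpace X] [T2Space X]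
    (J : ↥unitCircleSet → X) (hJ : Topology.IsEmbedding J)
    (A B : Set X) (hA : IsCompact A) (hB : IsCompact B) (hAB : Disjoint A B)
    (k : ℕ) (hk : interlacingNumber (Set.range J) A B = k) :
    ∃ U V : Set X, U ⊆ Set.range J ∧ V ⊆ Set.range J ∧
      IsOpen (Subtype.val ⁻¹' U : Set ↥(Set.range J)) ∧
      IsOpen (Subtype.val ⁻¹' V : Set ↥(Set.range J)) ∧
      A ∩ Set.range J ⊆ U ∧ B ∩ Set.range J ⊆ V ∧
      ∀ A₁ B₁ : Set X, IsCompact A₁ → IsCompact B₁ → Disjoint A₁ B₁ →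
        A ∩ Set.range J ⊆ A₁ ∩ Set.range J → A₁ ∩ Set.range J ⊆ U →
        B ∩ Set.range J ⊆ B₁ ∩ Set.range J → B₁ ∩ Set.range J ⊆ V →
        interlacingNumber (Set.range J) A₁ B₁ = k := by
  set e : 𝕋 → X := J ∘ unitAddCircleHomeomorph
  have he : IsEmbedding e := hJ.comp unitAddCircleHomeomorph.isEmbedding
  rw [← unitAddCircleHomeomorph.surjective.range_comp J] at hk ⊢
  obtain ⟨U, V, hU, hV, hAU, hBV, hUV⟩ := UnitAddCircle.exists_isOpen_interlacingCards_subset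
    (hA.isClosed.preimage he.continuous) (hB.isClosed.preimage he.continuous) (hAB.preimage e)
  refine ⟨e '' U, e '' V, image_subset_range _ _, image_subset_range _ _,
    he.isOpen_val_preimage_image hU, he.isOpen_val_preimage_image hV, ?_, ?_, ?_⟩
  · rintro _ ⟨ha, _, rfl⟩
    exact mem_image_of_mem e (hAU ha)
  · rintro _ ⟨hb, _, rfl⟩
    exact mem_image_of_mem e (hBV hb)
  intro A₁ B₁ _ _ _ hAA₁ hA₁U hBB₁ hB₁V
  rw [← hk, interlacingNumber_eq_sSup, interlacingNumber_eq_sSup]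
  congr 1
  refine Subset.antisymm ?_ (interlacingCards_mono hAA₁ hBB₁)
  calc interlacingCards (range e) A₁ B₁
      ⊆ interlacingCards (range e) (e '' U) (e '' V) :=
        interlacingCards_mono (subset_inter hA₁U inter_subset_right)
          (subset_inter hB₁V inter_subset_right)
    _ = interlacingCards univ U V := by
        rw [he.interlacingCards_range, he.injective.preimage_image, he.injective.preimage_image]
    _ ⊆ interlacingCards univ (e ⁻¹' A) (e ⁻¹' B) := hUV
    _ = interlacingCards (range e) A B := (he.interlacingCards_range A B).symm
end

section
/- Let A' and B' be disjoint finite subsets of the unit circle S¹ ⊆ ℂ, each of cardinality k ≥ 1, such that every connected component of S¹ ∖ A' contains exactly one point of B'. If U is a connected open subset of S¹ with U ∩ B' = ∅, then U contains at most one point of A'. -/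
/-!
Measure angles counterclockwise from a point `p ∈ B'`, which `U` misses; this identifies the circle
punctured at `p` with `(0, 2π)` and turns `U` into an interval. If `U` contained two points of `A'`,
then together with the first point of `A'` after the smaller angle, `U` would contain an open arc
of `S¹ ∖ A'` between two consecutive points of `A'`. Such an arc contains a whole connected
component of `S¹ ∖ A'`: seen from its left endpoint, a connected subset of `S¹ ∖ A'` has an interval
of angles that cannot cross the angle of the right endpoint. By interlacing, that component, and
hence `U`, meets `B'`.
-/

open Set Topology

open Complex
open scoped Real

lemma mem_unitCircleSet {z : ℂ} : z ∈ unitCircleSet ↔ ‖z‖ = 1 := mem_sphere_zero_iff_norm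

noncomputable def circleFrom (p : ℂ) (t : ℝ) : ℂ := p * exp (t * I)

/-- `π + arg (-z / p)` takes values in `(0, 2π]`, with `2π` attained exactly at `z = p`, so that
`angleFrom p` is continuous on the circle punctured at `p`. -/
noncomputable def angleFrom (p z : ℂ) : ℝ := π + arg (-z / p)

lemma circleFrom_mem_unitCircleSet {p : ℂ} (hp : ‖p‖ = 1) (t : ℝ) :
    circleFrom p t ∈ unitCircleSet := by
  simp [mem_unitCircleSet, circleFrom, hp, norm_exp_ofReal_mul_I]

lemma circleFrom_circleFrom (p : ℂ) (s t : ℝ) :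
    circleFrom (circleFrom p s) t = circleFrom p (s + t) := by
  simp only [circleFrom, ofReal_add, add_mul, exp_add, mul_assoc]

lemma circleFrom_two_pi (p : ℂ) : circleFrom p (2 * π) = p := by
  simp [circleFrom]

lemma angleFrom_mem_Ioc (p z : ℂ) : angleFrom p z ∈ Ioc 0 (2 * π) := by
  unfold angleFrom
  constructor <;> linarith [neg_pi_lt_arg (-z / p), arg_le_pi (-z / p)]

lemma circleFrom_angleFrom {p z : ℂ} (hp : ‖p‖ = 1) (hz : ‖z‖ = 1) :
    circleFrom p (angleFrom p z) = z := by
  have hp0 : p ≠ 0 := norm_ne_zero_iff.mp (by simp [hp])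
  have hexp : exp (arg (-z / p) * I) = -z / p := by
    simpa [hz, hp] using norm_mul_exp_arg_mul_I (-z / p)
  rw [circleFrom, angleFrom, ofReal_add, add_mul, exp_add, exp_pi_mul_I, hexp]
  field_simp

lemma angleFrom_circleFrom {p : ℂ} (hp : ‖p‖ = 1) {t : ℝ} (ht : t ∈ Ioc 0 (2 * π)) :
    angleFrom p (circleFrom p t) = t := by
  have hp0 : p ≠ 0 := norm_ne_zero_iff.mp (by simp [hp])
  have hquot : -circleFrom p t / p = exp (((t - π : ℝ) : ℂ) * I) := by
    rw [circleFrom, ofReal_sub, sub_mul, exp_sub, exp_pi_mul_I]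
    field_simp
  rw [angleFrom, hquot, exp_mul_I,
    arg_cos_add_sin_mul_I ⟨by linarith [ht.1], by linarith [ht.2]⟩]
  ring

lemma angleFrom_lt_two_pi {p z : ℂ} (hp : ‖p‖ = 1) (hz : ‖z‖ = 1) (hzp : z ≠ p) :
    angleFrom p z < 2 * π := by
  refine (angleFrom_mem_Ioc p z).2.lt_of_ne fun h => hzp ?_
  rw [← circleFrom_angleFrom hp hz, h, circleFrom_two_pi]

lemma continuousOn_angleFrom {p : ℂ} (hp : ‖p‖ = 1) :
    ContinuousOn (angleFrom p) (unitCircleSet \ {p}) := by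
  rintro z ⟨hz, hzp : z ≠ p⟩
  rw [mem_unitCircleSet] at hz
  have hslit : -z / p ∈ slitPlane := by
    refine mem_slitPlane_iff_arg.mpr ⟨fun h => ?_, by simp [hp, hz, ← norm_ne_zero_iff]⟩
    have := angleFrom_lt_two_pi hp hz hzp
    rw [angleFrom, h] at this
    linarith
  exact (continuousAt_const.add <|
    (continuousAt_arg hslit).comp (f := fun w => -w / p) (by fun_prop)).continuousWithinAt

lemma angleFrom_injOn {p : ℂ} (hp : ‖p‖ = 1) : InjOn (angleFrom p) unitCircleSet :=
  LeftInvOn.injOn fun _ hz => circleFrom_angleFrom hp (mem_unitCircleSet.mp hz)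

lemma connectedComponentIn_diff_subset_arc {A : Set ℂ} {q : ℂ} (hq : ‖q‖ = 1) (hqA : q ∈ A)
    {d : ℝ} (hd : d ∈ Ioc 0 (2 * π)) (hdA : circleFrom q d ∈ A) {t : ℝ} (ht : t ∈ Ioo 0 d) :
    connectedComponentIn (unitCircleSet \ A) (circleFrom q t) ⊆ circleFrom q '' Ioo 0 d := by
  set K := connectedComponentIn (unitCircleSet \ A) (circleFrom q t)
  have hK : K ⊆ unitCircleSet \ A := connectedComponentIn_subset _ _
  have hKq : K ⊆ unitCircleSet \ {q} := fun z hz =>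
    ⟨(hK hz).1, fun h => (hK hz).2 (eq_of_mem_singleton h ▸ hqA)⟩
  have hJ : (angleFrom q '' K).OrdConnected :=
    (isPreconnected_connectedComponentIn.image _
      ((continuousOn_angleFrom hq).mono hKq)).ordConnected
  intro z hz
  have htK : t ∈ angleFrom q '' K :=
    ⟨_, mem_connectedComponentIn (connectedComponentIn_nonempty_iff.mp ⟨z, hz⟩),
      angleFrom_circleFrom hq ⟨ht.1, ht.2.le.trans hd.2⟩⟩
  have hz1 := mem_unitCircleSet.mp (hK hz).1
  -- if `z` lay beyond angle `d`, the connected set `K` would contain the point of `A` at angle `d`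
  have hzd : angleFrom q z < d := by
    by_contra! hdz
    obtain ⟨w, hwK, hwd⟩ := hJ.out htK ⟨z, hz, rfl⟩ ⟨ht.2.le, hdz⟩
    refine (hK hwK).2 ?_
    rwa [← circleFrom_angleFrom hq (mem_unitCircleSet.mp (hK hwK).1), hwd]
  exact ⟨angleFrom q z, ⟨(angleFrom_mem_Ioc q z).1, hzd⟩, circleFrom_angleFrom hq hz1⟩

lemma exists_connectedComponentIn_diff_subset {A U : Set ℂ} (hA : A ⊆ unitCircleSet)
    (hAfin : A.Finite) (hU : U ⊆ unitCircleSet) (hUconn : IsPreconnected U) {p : ℂ}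
    (hp : ‖p‖ = 1) (hpU : p ∉ U) {a₁ a₂ : ℂ} (ha₁ : a₁ ∈ U ∩ A) (ha₂ : a₂ ∈ U ∩ A)
    (hne : a₁ ≠ a₂) :
    ∃ x ∈ unitCircleSet \ A, connectedComponentIn (unitCircleSet \ A) x ⊆ U := by
  wlog hlt : angleFrom p a₁ < angleFrom p a₂ generalizing a₁ a₂
  · exact this ha₂ ha₁ hne.symm <|
      ((angleFrom_injOn hp).ne (hA ha₁.2) (hA ha₂.2) hne).lt_or_gt.resolve_left hlt
  obtain ⟨a₃, ⟨ha₃A, h13⟩, hmin⟩ :=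
    exists_min_image {a ∈ A | angleFrom p a₁ < angleFrom p a} (angleFrom p)
      (hAfin.subset (sep_subset _ _)) ⟨a₂, ha₂.2, hlt⟩
  set t₁ := angleFrom p a₁
  set d := angleFrom p a₃ - t₁ with hd
  have ht₁ := angleFrom_mem_Ioc p a₁
  have ht₃ := angleFrom_mem_Ioc p a₃
  have hI : (angleFrom p '' U).OrdConnected :=
    (hUconn.image _ ((continuousOn_angleFrom hp).mono fun z hz =>
      ⟨hU hz, fun h => hpU (eq_of_mem_singleton h ▸ hz)⟩)).ordConnected
  have harc : circleFrom p '' Ioo t₁ (angleFrom p a₃) ⊆ U := by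
    rintro _ ⟨s, hs, rfl⟩
    obtain ⟨z, hz, rfl⟩ := hI.out ⟨a₁, ha₁.1, rfl⟩ ⟨a₂, ha₂.1, rfl⟩
      ⟨hs.1.le, hs.2.le.trans (hmin a₂ ⟨ha₂.2, hlt⟩)⟩
    rwa [circleFrom_angleFrom hp (mem_unitCircleSet.mp (hU hz))]
  have hbase : circleFrom p t₁ = a₁ := circleFrom_angleFrom hp (mem_unitCircleSet.mp (hA ha₁.2))
  refine ⟨circleFrom a₁ (d / 2),
    ⟨circleFrom_mem_unitCircleSet (mem_unitCircleSet.mp (hA ha₁.2)) _, fun hx => ?_⟩, ?_⟩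
  · rw [← hbase, circleFrom_circleFrom] at hx
    have hmid : angleFrom p (circleFrom p (t₁ + d / 2)) = t₁ + d / 2 :=
      angleFrom_circleFrom hp ⟨by linarith [ht₁.1], by linarith [ht₃.2]⟩
    have := hmin _ ⟨hx, by rw [hmid]; linarith⟩
    rw [hmid] at this
    linarith
  · refine (connectedComponentIn_diff_subset_arc (mem_unitCircleSet.mp (hA ha₁.2)) ha₁.2
      (d := d) ⟨by linarith, by linarith [ht₁.1, ht₃.2]⟩ ?_ ⟨by linarith, by linarith⟩).trans ?_
    · rwa [← hbase, circleFrom_circleFrom, add_sub_cancel,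
        circleFrom_angleFrom hp (mem_unitCircleSet.mp (hA ha₃A))]
    · rintro _ ⟨s, hs, rfl⟩
      rw [← hbase, circleFrom_circleFrom]
      exact harc ⟨t₁ + s, ⟨by linarith [hs.1], by linarith [hs.2]⟩, rfl⟩

theorem connected_open_misses_B_meets_A_once_general (A' B' : Set ℂ) (k : ℕ) (hk : 1 ≤ k)
    (hA'sub : A' ⊆ unitCircleSet) (hB'sub : B' ⊆ unitCircleSet)
    (hA'fin : A'.Finite)
    (hB'card : B'.ncard = k)
    (hinter : ∀ x ∈ unitCircleSet \ A',
      ∃! b, b ∈ B' ∧ b ∈ connectedComponentIn (unitCircleSet \ A') x)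
    (U : Set ℂ) (hU : U ⊆ unitCircleSet) (hUconn : IsConnected U)
    (hUB : U ∩ B' = ∅) :
    (U ∩ A').Subsingleton := by
  intro a₁ ha₁ a₂ ha₂
  by_contra hne
  obtain ⟨p, hpB⟩ := nonempty_of_ncard_ne_zero (by omega : B'.ncard ≠ 0)
  have hpU : p ∉ U := fun hpU => hUB.subset ⟨hpU, hpB⟩
  obtain ⟨x, hx, hxU⟩ := exists_connectedComponentIn_diff_subset hA'sub hA'fin hU
    hUconn.isPreconnected (mem_unitCircleSet.mp (hB'sub hpB)) hpU ha₁ ha₂ hne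
  obtain ⟨b, ⟨hbB, hbx⟩, -⟩ := hinter x hx
  exact hUB.subset ⟨hxU hbx, hbB⟩

/-- If `(A', B')` is a `k`-interlacing of points on the unit circle and `U` is a connected
subset of `S¹`, open in the subspace topology of `S¹`, with `U ∩ B' = ∅`, then `U`
contains at most one point of `A'`. -/
theorem connected_open_misses_B_meets_A_once (A' B' : Set ℂ) (k : ℕ) (hk : 1 ≤ k)
    (hA'sub : A' ⊆ unitCircleSet) (hB'sub : B' ⊆ unitCircleSet)
    (hdisj : Disjoint A' B') (hA'fin : A'.Finite) (hB'fin : B'.Finite)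
    (hA'card : A'.ncard = k) (hB'card : B'.ncard = k)
    (hinter : ∀ x ∈ unitCircleSet \ A',
      ∃! b, b ∈ B' ∧ b ∈ connectedComponentIn (unitCircleSet \ A') x)
    (U : Set ℂ) (hU : U ⊆ unitCircleSet) (hUconn : IsConnected U)
    (hUopen : IsOpen (Subtype.val ⁻¹' U : Set ↥unitCircleSet))
    (hUB : U ∩ B' = ∅) :
    (U ∩ A').Subsingleton :=
  connected_open_misses_B_meets_A_once_general A' B' k hk hA'sub hB'sub hA'fin hB'card hinter U hU
    hUconn hUB
end

section
/- Let n ≥ 1 and let p_n : S¹ → S¹ be the covering map p_n(z) = zⁿ. If A' and B' are disjoint finite subsets of S¹, each of cardinality k ≥ 1, forming a k-interlacing of points, then p_n⁻¹(A') and p_n⁻¹(B') are disjoint finite subsets of S¹, each of cardinality nk, forming an nk-interlacing of points. -/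
open Set Topology

/-!
Parametrize `S¹` by `circleMap 0 1 : θ ↦ exp (θ i)`. If `A` is closed and meets `S¹`, every point
of `S¹ \ A` lies on an open arc `(a, b)` of length at most `2π` with both endpoints in `A` and
no point of `A` inside, and that arc is its connected component in `S¹ \ A`. If `(a, b)` is such
a gap of `A'`, then `(a / n, b / n)` is a gap of `{z | zⁿ ∈ A'}`, and `z ↦ zⁿ` maps the upper arc
bijectively onto the lower one; so the unique point of `B'` in a component downstairs pulls back
to a unique point of the lift of `B'` in the component upstairs. The cardinalities are multiplied
by `n` because a nonzero complex number has exactly `n` distinct `n`-th roots.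
-/

open Real

theorem Set.BijOn.existsUnique_comp {α β : Type*} {f : α → β} {s : Set α} {t : Set β}
    (h : BijOn f s t) {p : β → Prop} (hp : ∃! y, p y ∧ y ∈ t) : ∃! x, p (f x) ∧ x ∈ s := by
  obtain ⟨y, ⟨hpy, hyt⟩, hy⟩ := hp
  obtain ⟨x, hxs, rfl⟩ := h.surjOn hyt
  exact ⟨x, ⟨hpy, hxs⟩, fun x' ⟨hpx', hx's⟩ ↦ h.injOn hx's hxs (hy _ ⟨hpx', h.mapsTo hx's⟩)⟩

theorem Set.ncard_preimage_of_ncard_fiber {α β : Type*} {f : α → β} {s : Set β} {n : ℕ}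
    (hs : s.Finite) (hfin : ∀ b ∈ s, (f ⁻¹' {b}).Finite)
    (hcard : ∀ b ∈ s, (f ⁻¹' {b}).ncard = n) : (f ⁻¹' s).ncard = n * s.ncard := by
  rw [← biUnion_preimage_singleton, hs.ncard_biUnion hfin (pairwiseDisjoint_fiber f s),
    finsum_mem_congr rfl hcard, finsum_mem_eq_finite_toFinset_sum _ hs, Finset.sum_const,
    smul_eq_mul, ncard_eq_toFinset_card s hs, mul_comm]

theorem exists_Ioo_gap {T : Set ℝ} (hT : IsClosed T) {lo hi t : ℝ} (hlo : lo ∈ T) (hhi : hi ∈ T)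
    (ht : t ∈ Icc lo hi) (htT : t ∉ T) :
    ∃ a ∈ T, ∃ b ∈ T, lo ≤ a ∧ b ≤ hi ∧ t ∈ Ioo a b ∧ ∀ s ∈ Ioo a b, s ∉ T := by
  have hL : IsCompact (T ∩ Icc lo t) := isCompact_Icc.inter_left hT
  have hR : IsCompact (T ∩ Icc t hi) := isCompact_Icc.inter_left hT
  obtain ⟨haT, hloa, hat⟩ := hL.sSup_mem ⟨lo, hlo, le_rfl, ht.1⟩
  obtain ⟨hbT, htb, hbhi⟩ := hR.sInf_mem ⟨hi, hhi, ht.2, le_rfl⟩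
  refine ⟨_, haT, _, hbT, hloa, hbhi,
    ⟨hat.lt_of_ne (haT.ne_of_notMem htT), htb.lt_of_ne' (hbT.ne_of_notMem htT)⟩, ?_⟩
  rintro s ⟨has, hsb⟩ hsT
  rcases le_total s t with hst | hts
  · exact has.not_ge (le_csSup hL.bddAbove ⟨hsT, hloa.trans has.le, hst⟩)
  · exact hsb.not_ge (csInf_le hR.bddBelow ⟨hsT, hts, hsb.le.trans hbhi⟩)

theorem range_circleMap_zero_one : range (circleMap 0 1) = unitCircleSet := by
  simp [range_circleMap, unitCircleSet]

theorem circleMap_mem_unitCircleSet (θ : ℝ) : circleMap 0 1 θ ∈ unitCircleSet :=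
  range_circleMap_zero_one ▸ mem_range_self θ

theorem circleMap_zero_one_pow (n : ℕ) (θ : ℝ) : circleMap 0 1 θ ^ n = circleMap 0 1 (n * θ) := by
  simp [circleMap_zero_pow]

theorem unitCircleSet_eq_image_Icc (a : ℝ) :
    unitCircleSet = circleMap 0 1 '' Icc a (a + 2 * π) := by
  rw [(periodic_circleMap 0 1).image_Icc two_pi_pos, range_circleMap_zero_one]

theorem disjoint_circleMap_image_Ioo_Icc (a b : ℝ) :
    Disjoint (circleMap 0 1 '' Ioo a b) (circleMap 0 1 '' Icc b (a + 2 * π)) := by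
  rw [disjoint_iff_forall_ne]
  rintro _ ⟨s, ⟨has, hsb⟩, rfl⟩ _ ⟨u, ⟨hbu, hua⟩, rfl⟩ h
  have : s = u := eq_of_circleMap_eq one_ne_zero (by rw [abs_lt]; constructor <;> linarith) h
  linarith

theorem zero_notMem_unitCircleSet : (0 : ℂ) ∉ unitCircleSet := by
  simp [unitCircleSet]

theorem mem_unitCircleSet_of_pow_mem {n : ℕ} (hn : n ≠ 0) {z : ℂ} (h : z ^ n ∈ unitCircleSet) :
    z ∈ unitCircleSet := by
  simp only [unitCircleSet, mem_sphere_zero_iff_norm, norm_pow] at h ⊢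
  exact (pow_eq_one_iff_of_nonneg (norm_nonneg z) hn).1 h

structure IsCircleGap (A : Set ℂ) (a b : ℝ) : Prop where
  lt : a < b
  le_add : b ≤ a + 2 * π
  left_mem : circleMap 0 1 a ∈ A
  right_mem : circleMap 0 1 b ∈ A
  notMem : ∀ s ∈ Ioo a b, circleMap 0 1 s ∉ A

theorem exists_isCircleGap {A : Set ℂ} (hA : IsClosed A) (hAS : (A ∩ unitCircleSet).Nonempty)
    {t : ℝ} (ht : circleMap 0 1 t ∉ A) : ∃ a b, IsCircleGap A a b ∧ t ∈ Ioo a b := by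
  obtain ⟨_, hzA, hzS⟩ := hAS
  obtain ⟨θ, rfl⟩ := range_circleMap_zero_one ▸ hzS
  obtain ⟨lo, hlo, hθ⟩ := (periodic_circleMap 0 1).exists_mem_Ioc two_pi_pos θ (t - 2 * π)
  rw [sub_add_cancel] at hlo
  have hloA : circleMap 0 1 lo ∈ A := hθ ▸ hzA
  have hhiA : circleMap 0 1 (lo + 2 * π) ∈ A := (periodic_circleMap 0 1 lo).symm ▸ hloA
  obtain ⟨a, ha, b, hb, hloa, hbhi, htab, hgap⟩ :=
    exists_Ioo_gap (hA.preimage (continuous_circleMap 0 1)) hloA hhiA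
      ⟨hlo.2, by linarith [hlo.1]⟩ ht
  exact ⟨a, b, ⟨htab.1.trans htab.2, by linarith, ha, hb, hgap⟩, htab⟩

namespace IsCircleGap

variable {A : Set ℂ} {a b : ℝ}

theorem image_Ioo_subset (h : IsCircleGap A a b) :
    circleMap 0 1 '' Ioo a b ⊆ unitCircleSet \ A := by
  rintro _ ⟨s, hs, rfl⟩
  exact ⟨circleMap_mem_unitCircleSet s, h.notMem s hs⟩

theorem connectedComponentIn_eq (h : IsCircleGap A a b) {t : ℝ} (ht : t ∈ Ioo a b) :
    connectedComponentIn (unitCircleSet \ A) (circleMap 0 1 t) = circleMap 0 1 '' Ioo a b := by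
  have hcont := continuous_circleMap 0 1
  have hU : IsPreconnected (circleMap 0 1 '' Ioo a b) :=
    isPreconnected_Ioo.image _ hcont.continuousOn
  refine Subset.antisymm ?_
    (hU.subset_connectedComponentIn (mem_image_of_mem _ ht) h.image_Ioo_subset)
  set C := connectedComponentIn (unitCircleSet \ A) (circleMap 0 1 t)
  have hCF : C ⊆ unitCircleSet \ A := connectedComponentIn_subset _ _
  have htC : circleMap 0 1 t ∈ C :=
    mem_connectedComponentIn (h.image_Ioo_subset (mem_image_of_mem _ ht))
  have hdisj := disjoint_circleMap_image_Ioo_Icc a b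
  have hF : (unitCircleSet \ A) ∩ circleMap 0 1 '' Icc a b ⊆ circleMap 0 1 '' Ioo a b := by
    rintro _ ⟨⟨-, hzA⟩, s, hs, rfl⟩
    refine ⟨s, ⟨hs.1.lt_of_ne ?_, hs.2.lt_of_ne ?_⟩, rfl⟩
    · rintro rfl; exact hzA h.left_mem
    · rintro rfl; exact hzA h.right_mem
  have hcover : C ⊆ circleMap 0 1 '' Icc a b ∪ circleMap 0 1 '' Icc b (a + 2 * π) := by
    rw [← image_union, Icc_union_Icc_eq_Icc h.lt.le h.le_add, ← unitCircleSet_eq_image_Icc a]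
    exact hCF.trans sdiff_subset
  have hmeet : C ∩ (circleMap 0 1 '' Icc a b ∩ circleMap 0 1 '' Icc b (a + 2 * π)) = ∅ :=
    eq_empty_of_forall_notMem fun z ⟨hzC, hz₁, hz₂⟩ ↦
      hdisj.notMem_of_mem_left (hF ⟨hCF hzC, hz₁⟩) hz₂
  -- The two closed arcs cover the circle and meet only in `A`, so `C` lies in one of them.
  rcases isPreconnected_iff_subset_of_disjoint_closed.1 isPreconnected_connectedComponentIn _ _
      (isCompact_Icc.image hcont).isClosed (isCompact_Icc.image hcont).isClosed hcover hmeet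
    with hC | hC
  · exact fun z hz ↦ hF ⟨hCF hz, hC hz⟩
  · exact absurd (hC htC) (hdisj.notMem_of_mem_left (mem_image_of_mem _ ht))

theorem lift_pow (h : IsCircleGap A a b) {n : ℕ} (hn : 0 < n) :
    IsCircleGap {z ∈ unitCircleSet | z ^ n ∈ A} (a / n) (b / n) := by
  have hn' : (0 : ℝ) < n := Nat.cast_pos.2 hn
  have hmul (θ : ℝ) : (n : ℝ) * (θ / n) = θ := mul_div_cancel₀ θ hn'.ne'
  refine ⟨div_lt_div_of_pos_right h.lt hn', ?_, ?_, ?_, ?_⟩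
  · calc b / n ≤ (a + 2 * π) / n := div_le_div_of_nonneg_right h.le_add hn'.le
      _ = a / n + 2 * π / n := add_div _ _ _
      _ ≤ a / n + 2 * π := by
        gcongr; exact div_le_self two_pi_pos.le (Nat.one_le_cast.2 hn)
  · exact ⟨circleMap_mem_unitCircleSet _, by rw [circleMap_zero_one_pow, hmul]; exact h.left_mem⟩
  · exact ⟨circleMap_mem_unitCircleSet _, by rw [circleMap_zero_one_pow, hmul]; exact h.right_mem⟩
  · rintro s ⟨has, hsb⟩ ⟨-, hs⟩
    rw [circleMap_zero_one_pow] at hs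
    refine h.notMem _ ⟨?_, ?_⟩ hs
    · rwa [div_lt_iff₀' hn'] at has
    · rwa [lt_div_iff₀' hn'] at hsb

end IsCircleGap

theorem bijOn_pow_circleMap_image_Ioo {n : ℕ} (hn : 0 < n) {a b : ℝ} (hab : b ≤ a + 2 * π) :
    BijOn (· ^ n) (circleMap 0 1 '' Ioo (a / n) (b / n)) (circleMap 0 1 '' Ioo a b) := by
  have hn' : (0 : ℝ) < n := Nat.cast_pos.2 hn
  have hIoo (s : ℝ) : s ∈ Ioo (a / n) (b / n) ↔ n * s ∈ Ioo a b := by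
    simp only [mem_Ioo, div_lt_iff₀' hn', lt_div_iff₀' hn']
  refine ⟨?_, ?_, ?_⟩
  · rintro _ ⟨s, hs, rfl⟩
    exact ⟨n * s, (hIoo s).1 hs, (circleMap_zero_one_pow n s).symm⟩
  · rintro _ ⟨s, hs, rfl⟩ _ ⟨s', hs', rfl⟩ hss'
    simp only [circleMap_zero_one_pow] at hss'
    obtain ⟨h₁, h₂⟩ := (hIoo s).1 hs
    obtain ⟨h₁', h₂'⟩ := (hIoo s').1 hs'
    have := eq_of_circleMap_eq one_ne_zero (by rw [abs_lt]; constructor <;> linarith) hss'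
    rw [mul_left_cancel₀ hn'.ne' this]
  · rintro _ ⟨u, hu, rfl⟩
    have hu' : (n : ℝ) * (u / n) = u := mul_div_cancel₀ u hn'.ne'
    refine ⟨circleMap 0 1 (u / n), ⟨u / n, (hIoo _).2 (hu'.symm ▸ hu), rfl⟩, ?_⟩
    simp only [circleMap_zero_one_pow, hu']

theorem ncard_pow_preimage_singleton {n : ℕ} (hn : n ≠ 0) {a : ℂ} (ha : a ≠ 0) :
    ((· ^ n) ⁻¹' {a} : Set ℂ).ncard = n := by
  have hζ := Complex.isPrimitiveRoot_exp n hn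
  have hroots : ((· ^ n) ⁻¹' {a} : Set ℂ) = ((Polynomial.nthRoots n a).toFinset : Set ℂ) := by
    ext z; simp [Polynomial.mem_nthRoots (Nat.pos_of_ne_zero hn)]
  rw [hroots, ncard_coe_finset, Multiset.toFinset_card_of_nodup (hζ.nthRoots_nodup ha),
    hζ.card_nthRoots, if_pos (IsAlgClosed.exists_pow_nat_eq a (Nat.pos_of_ne_zero hn))]

theorem finite_pow_preimage_singleton {n : ℕ} (hn : n ≠ 0) {a : ℂ} (ha : a ≠ 0) :
    ((· ^ n) ⁻¹' {a} : Set ℂ).Finite :=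
  finite_of_ncard_ne_zero ((ncard_pow_preimage_singleton hn ha).trans_ne hn)

theorem Set.Finite.pow_preimage {n : ℕ} (hn : n ≠ 0) {A : Set ℂ} (hA : A.Finite) (h0 : 0 ∉ A) :
    ((· ^ n) ⁻¹' A : Set ℂ).Finite :=
  hA.preimage' fun _ ha ↦ finite_pow_preimage_singleton hn (ha.ne_of_notMem h0)

theorem ncard_pow_preimage {n : ℕ} (hn : n ≠ 0) {A : Set ℂ} (hA : A.Finite) (h0 : 0 ∉ A) :
    ((· ^ n) ⁻¹' A : Set ℂ).ncard = n * A.ncard :=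
  ncard_preimage_of_ncard_fiber hA
    (fun _ ha ↦ finite_pow_preimage_singleton hn (ha.ne_of_notMem h0))
    (fun _ ha ↦ ncard_pow_preimage_singleton hn (ha.ne_of_notMem h0))

theorem sep_unitCircleSet_pow_mem_eq {n : ℕ} (hn : n ≠ 0) {A : Set ℂ} (hA : A ⊆ unitCircleSet) :
    {z ∈ unitCircleSet | z ^ n ∈ A} = (· ^ n) ⁻¹' A :=
  ext fun _ ↦ ⟨And.right, fun hz ↦ ⟨mem_unitCircleSet_of_pow_mem hn (hA hz), hz⟩⟩

theorem existsUnique_mem_connectedComponentIn_lift_pow {n : ℕ} (hn : 0 < n) {A B : Set ℂ}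
    (hA : IsClosed A) (hAS : (A ∩ unitCircleSet).Nonempty)
    (hB : ∀ x ∈ unitCircleSet \ A, ∃! b, b ∈ B ∧ b ∈ connectedComponentIn (unitCircleSet \ A) x)
    {x : ℂ} (hx : x ∈ unitCircleSet \ {z ∈ unitCircleSet | z ^ n ∈ A}) :
    ∃! y, y ∈ {z ∈ unitCircleSet | z ^ n ∈ B} ∧
      y ∈ connectedComponentIn (unitCircleSet \ {z ∈ unitCircleSet | z ^ n ∈ A}) x := by
  obtain ⟨hxS, hxA⟩ := hx
  obtain ⟨t, rfl⟩ := range_circleMap_zero_one ▸ hxS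
  have hntA : circleMap 0 1 (n * t) ∉ A := fun h ↦ hxA ⟨hxS, (circleMap_zero_one_pow n t).symm ▸ h⟩
  obtain ⟨a, b, hgap, hab⟩ := exists_isCircleGap hA hAS hntA
  have hn' : (0 : ℝ) < n := Nat.cast_pos.2 hn
  have ht : t ∈ Ioo (a / n) (b / n) := by
    simpa only [mem_Ioo, div_lt_iff₀' hn', lt_div_iff₀' hn'] using hab
  have hdown := hB _ ⟨circleMap_mem_unitCircleSet _, hntA⟩
  have hlift := hgap.lift_pow hn
  rw [hgap.connectedComponentIn_eq hab] at hdown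
  rw [hlift.connectedComponentIn_eq ht]
  refine (existsUnique_congr fun y ↦ ?_).1
    ((bijOn_pow_circleMap_image_Ioo hn hgap.le_add).existsUnique_comp hdown)
  exact and_congr_left fun hy ↦ ⟨fun h ↦ ⟨(hlift.image_Ioo_subset hy).1, h⟩, And.right⟩

/-- Lifting interlacings along the `n`-fold cover `z ↦ zⁿ` of the circle: if `(A', B')`
is a `k`-interlacing of points on `S¹`, then the preimages of `A'` and `B'` under
`z ↦ zⁿ` form an `nk`-interlacing of points on `S¹`. -/
theorem interlacing_lift_pow (n : ℕ) (hn : 1 ≤ n) (A' B' : Set ℂ) (k : ℕ)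
    (h : IsPointInterlacing unitCircleSet A' B' k) :
    IsPointInterlacing unitCircleSet
      {z ∈ unitCircleSet | z ^ n ∈ A'} {z ∈ unitCircleSet | z ^ n ∈ B'} (n * k) := by
  obtain ⟨hk, hA, hB, hAB, hAfin, hBfin, hAcard, hBcard, hcomp⟩ := h
  have hn0 : n ≠ 0 := Nat.one_le_iff_ne_zero.1 hn
  have hA0 : (0 : ℂ) ∉ A' := fun h0 ↦ zero_notMem_unitCircleSet (hA h0)
  have hB0 : (0 : ℂ) ∉ B' := fun h0 ↦ zero_notMem_unitCircleSet (hB h0)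
  have hAS : (A' ∩ unitCircleSet).Nonempty := by
    rw [inter_eq_left.2 hA, ← ncard_pos hAfin]; omega
  have hA' := sep_unitCircleSet_pow_mem_eq hn0 hA
  have hB' := sep_unitCircleSet_pow_mem_eq hn0 hB
  refine ⟨Nat.mul_pos hn hk, sep_subset _ _, sep_subset _ _, ?_, ?_, ?_, ?_, ?_,
    fun x hx ↦ existsUnique_mem_connectedComponentIn_lift_pow hn hAfin.isClosed hAS hcomp hx⟩
  · exact (hAB.preimage (· ^ n)).mono (fun _ h ↦ h.2) fun _ h ↦ h.2
  · exact hA' ▸ hAfin.pow_preimage hn0 hA0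
  · exact hB' ▸ hBfin.pow_preimage hn0 hB0
  · rw [hA', ncard_pow_preimage hn0 hAfin hA0, hAcard]
  · rw [hB', ncard_pow_preimage hn0 hBfin hB0, hBcard]
end

section
/- Let M be a nonempty Hausdorff topological space with open subsets U and V such that M = U ∪ V and each of U, V, and U ∩ V (with the subspace topology) is homeomorphic to Euclidean 3-space ℝ³ (EuclideanSpace ℝ (Fin 3)). Then M is a contractible space. -/
/-!
Straight lines in the charts contract `U`, `V` and `U ∩ V` onto a common point `a ∈ U ∩ V`,
keeping `a` fixed. Pick a continuous `ρ : M → [0, 1]` equal to `1` near `Uᶜ` and to `0` near `Vᶜ`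
(Urysohn: `M` is locally compact, σ-compact and Hausdorff, hence normal), and work with `U` where
`ρ ≤ 1/2`, with `V` where `ρ ≥ 1/2`. First run the contraction of `U` with delay `2ρ` (and that of
`V` with delay `2(1 - ρ)`): nothing moves on `ρ = 1/2`, while the points outside `U ∩ V` reach `a`.
Then contract inside `U ∩ V` and push the result along the contraction of `U` up to time `1 - 2ρ`
(of `V` up to `2ρ - 1`); on `ρ = 1/2` both halves reduce to the contraction of `U ∩ V`, and
outside `U ∩ V` they stay at `a`.
-/

open Set Topology Filter unitInterval

namespace DoubleSpace

section Glue

variable {X Y : Type*}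

noncomputable def glueAtHalf (ρ : X → ℝ) (F G : I × X → Y) (p : I × X) : Y :=
  if ρ p.2 ≤ 1 / 2 then F p else G p

lemma continuous_glueAtHalf [TopologicalSpace X] [TopologicalSpace Y] {ρ : X → ℝ}
    (hρ : Continuous ρ) {F G : I × X → Y}
    (hF : ContinuousOn F {p | ρ p.2 ≤ 1 / 2}) (hG : ContinuousOn G {p | 1 - ρ p.2 ≤ 1 / 2})
    (hFG : ∀ p, ρ p.2 = 1 / 2 → F p = G p) : Continuous (glueAtHalf ρ F G) :=
  continuous_if_le (by fun_prop) continuous_const hF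
    (hG.mono fun p (hp : 1 / 2 ≤ ρ p.2) => show 1 - ρ p.2 ≤ 1 / 2 by linarith) hFG

lemma glueAtHalf_eq_glueAtHalf {ρ : X → ℝ} {F G F' G' : I × X → Y} {p q : I × X}
    (hpq : p.2 = q.2) (hF : ρ p.2 ≤ 1 / 2 → F p = F' q) (hG : 1 - ρ p.2 ≤ 1 / 2 → G p = G' q) :
    glueAtHalf ρ F G p = glueAtHalf ρ F' G' q := by
  unfold glueAtHalf
  rw [← hpq]
  split_ifs with h
  · exact hF h
  · exact hG (by linarith)

lemma glueAtHalf_eq {ρ : X → ℝ} {F G : I × X → Y} {p : I × X} {y : Y}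
    (hF : ρ p.2 ≤ 1 / 2 → F p = y) (hG : 1 - ρ p.2 ≤ 1 / 2 → G p = y) :
    glueAtHalf ρ F G p = y := by
  unfold glueAtHalf
  split_ifs with h
  · exact hF h
  · exact hG (by linarith)

end Glue

variable {X : Type*} [TopologicalSpace X]

/-- A contraction of `O` onto `a` rel `a`. Only its values on `O × [0, 1]` matter; it is defined
on all of `X × ℝ`, with values in `O`, so that it composes freely with maps into `X`. -/
structure IsPointedContraction (O : Set X) (a : X) (h : X → ℝ → X) : Prop where
  continuousOn : ContinuousOn (Function.uncurry h) (O ×ˢ univ)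
  mapsTo : ∀ x s, h x s ∈ O
  map_zero : ∀ x ∈ O, h x 0 = x
  map_one : ∀ x ∈ O, h x 1 = a
  map_base : ∀ s, h a s = a

section Chart

variable {E : Type*} [TopologicalSpace E] [Zero E] {O : Set X}

open Classical in
/-- The coordinate chart `φ`, extended by `0` outside `O`. -/
noncomputable def chart (φ : O ≃ₜ E) (x : X) : E :=
  if h : x ∈ O then φ ⟨x, h⟩ else 0

lemma chart_of_mem (φ : O ≃ₜ E) {x : X} (hx : x ∈ O) : chart φ x = φ ⟨x, hx⟩ :=
  dif_pos hx

lemma continuousOn_chart (φ : O ≃ₜ E) : ContinuousOn (chart φ) O := by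
  rw [continuousOn_iff_continuous_domRestrict]
  convert φ.continuous using 1
  funext x
  exact chart_of_mem φ x.2

end Chart

section LineContraction

variable {E : Type*} [AddCommGroup E] [Module ℝ E] [TopologicalSpace E] [IsTopologicalAddGroup E]
  [ContinuousSMul ℝ E] {O : Set X}

noncomputable def lineContraction (φ : O ≃ₜ E) (a : O) (x : X) (s : ℝ) : X :=
  φ.symm (AffineMap.lineMap (chart φ x) (φ a) s)

lemma isPointedContraction_lineContraction (φ : O ≃ₜ E) (a : O) :
    IsPointedContraction O a (lineContraction φ a) where
  continuousOn := continuous_subtype_val.comp_continuousOn <| φ.symm.continuous.comp_continuousOn <|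
    ((continuousOn_chart φ).comp continuousOn_fst fun _ hp => hp.1).lineMap continuousOn_const
      continuousOn_snd
  mapsTo x s := Subtype.prop _
  map_zero x hx := by simp [lineContraction, chart_of_mem φ hx]
  map_one x _ := by simp [lineContraction]
  map_base s := by simp [lineContraction, chart_of_mem φ a.2]

end LineContraction

/-- What a cutoff `μ` needs for `{μ ≤ 1/2}` to be contracted within `O`, passing through the
contraction of `A ⊆ O`. -/
structure IsCutoff (O A : Set X) (μ : X → ℝ) : Prop where
  continuous : Continuous μ
  nonneg : ∀ x, 0 ≤ μ x
  mem_of_le_half : ∀ x, μ x ≤ 1 / 2 → x ∈ O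
  eventuallyEq_zero : ∀ x, μ x ≤ 1 / 2 → x ∉ A → μ =ᶠ[𝓝 x] 0

lemma IsCutoff.of_eventuallyEq {O P A : Set X} {μ : X → ℝ} (hμ : Continuous μ)
    (hμ₀ : ∀ x, 0 ≤ μ x) (hA : O ∩ P ⊆ A) (hO : ∀ x ∉ O, μ x = 1)
    (hP : ∀ x ∉ P, μ =ᶠ[𝓝 x] 0) : IsCutoff O A μ := by
  have hmem : ∀ x, μ x ≤ 1 / 2 → x ∈ O := fun x hx =>
    by_contra fun hxO => by linarith [hO x hxO]
  exact ⟨hμ, hμ₀, hmem, fun x hx hxA => hP x fun hxP => hxA (hA ⟨hmem x hx, hxP⟩)⟩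

section Relay

variable {O A : Set X} {a : X} {hO hA : X → ℝ → X} {μ : X → ℝ}

/-- The contraction `hO` run with delay `2 μ`: it completes exactly on `{μ = 0}` and does not move
`{μ ≥ 1/2}`. -/
def taperedContraction (hO : X → ℝ → X) (μ : X → ℝ) (p : I × X) : X :=
  hO p.2 (max 0 (p.1 - 2 * μ p.2))

/-- At time `1 - 2 μ` the contraction `hO` is the identity on `{μ = 1/2}`, so there only `hA`
is seen, and is constant `a` on `{μ = 0}`, where `hA` may be meaningless. -/
def relayedContraction (hO hA : X → ℝ → X) (μ : X → ℝ) (p : I × X) : X :=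
  hO (hA p.2 p.1) (1 - 2 * μ p.2)

lemma continuousOn_taperedContraction (cO : IsPointedContraction O a hO) (hμ : IsCutoff O A μ) :
    ContinuousOn (taperedContraction hO μ) {p | μ p.2 ≤ 1 / 2} := by
  have hμc := hμ.continuous
  have htime : Continuous fun p : I × X => (p.2, max 0 ((p.1 : ℝ) - 2 * μ p.2)) := by fun_prop
  exact cO.continuousOn.comp htime.continuousOn fun p hp => ⟨hμ.mem_of_le_half _ hp, trivial⟩

lemma taperedContraction_zero (cO : IsPointedContraction O a hO) (hμ : IsCutoff O A μ) {x : X}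
    (hx : μ x ≤ 1 / 2) : taperedContraction hO μ (0, x) = x := by
  have : max 0 ((0 : ℝ) - 2 * μ x) = 0 := max_eq_left (by linarith [hμ.nonneg x])
  simp only [taperedContraction, Icc.coe_zero, this, cO.map_zero x (hμ.mem_of_le_half x hx)]

lemma taperedContraction_of_eq_half (cO : IsPointedContraction O a hO) (hμ : IsCutoff O A μ)
    {p : I × X} (hp : μ p.2 = 1 / 2) : taperedContraction hO μ p = p.2 := by
  have : max 0 ((p.1 : ℝ) - 2 * μ p.2) = 0 := max_eq_left (by linarith [p.1.2.2])
  rw [taperedContraction, this, cO.map_zero _ (hμ.mem_of_le_half _ hp.le)]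

lemma relayedContraction_of_eq_half (cO : IsPointedContraction O a hO)
    (cA : IsPointedContraction A a hA) (hAO : A ⊆ O) {p : I × X} (hp : μ p.2 = 1 / 2) :
    relayedContraction hO hA μ p = hA p.2 p.1 := by
  rw [relayedContraction, hp, show (1 : ℝ) - 2 * (1 / 2) = 0 by norm_num,
    cO.map_zero _ (hAO (cA.mapsTo _ _))]

lemma relayedContraction_eq_base_of_eq_zero (cO : IsPointedContraction O a hO)
    (cA : IsPointedContraction A a hA) (hAO : A ⊆ O) {p : I × X} (hp : μ p.2 = 0) :
    relayedContraction hO hA μ p = a := by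
  rw [relayedContraction, hp, mul_zero, sub_zero, cO.map_one _ (hAO (cA.mapsTo _ _))]

lemma continuousOn_relayedContraction (cO : IsPointedContraction O a hO)
    (cA : IsPointedContraction A a hA) (hAO : A ⊆ O) (hA_open : IsOpen A) (hμ : IsCutoff O A μ) :
    ContinuousOn (relayedContraction hO hA μ) {p | μ p.2 ≤ 1 / 2} := by
  intro p hp
  by_cases hpA : p.2 ∈ A
  · have hμc := hμ.continuous
    have hinner : ContinuousAt (fun q : I × X => (hA q.2 q.1, 1 - 2 * μ q.2)) p := by
      have hA_at : ContinuousAt (Function.uncurry hA) (p.2, p.1) :=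
        cA.continuousOn.continuousAt (prod_mem_nhds (hA_open.mem_nhds hpA) univ_mem)
      exact (ContinuousAt.comp (f := fun q : I × X => (q.2, (q.1 : ℝ))) hA_at
        (by fun_prop)).prodMk (by fun_prop)
    refine ContinuousAt.continuousWithinAt ?_
    rw [← continuousWithinAt_univ]
    exact (cO.continuousOn _ ⟨hAO (cA.mapsTo _ _), trivial⟩).comp hinner.continuousWithinAt
      fun q _ => ⟨hAO (cA.mapsTo _ _), trivial⟩
  · have hzero : ∀ᶠ q in 𝓝 p, μ q.2 = 0 :=
      continuous_snd.continuousAt.eventually (hμ.eventuallyEq_zero _ hp hpA)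
    refine ((continuousAt_const (y := a)).congr ?_).continuousWithinAt
    filter_upwards [hzero] with q hq
    exact (relayedContraction_eq_base_of_eq_zero cO cA hAO hq).symm

lemma relayedContraction_zero (cO : IsPointedContraction O a hO)
    (cA : IsPointedContraction A a hA) (hAO : A ⊆ O) (hμ : IsCutoff O A μ) {x : X}
    (hx : μ x ≤ 1 / 2) : relayedContraction hO hA μ (0, x) = taperedContraction hO μ (1, x) := by
  by_cases hxA : x ∈ A
  · have : max 0 (1 - 2 * μ x) = 1 - 2 * μ x := max_eq_right (by linarith)
    simp only [relayedContraction, taperedContraction, Icc.coe_zero, Icc.coe_one,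
      cA.map_zero x hxA, this]
  · have hx0 : μ x = 0 := (hμ.eventuallyEq_zero x hx hxA).eq_of_nhds
    rw [relayedContraction_eq_base_of_eq_zero cO cA hAO (p := (0, x)) hx0, taperedContraction, hx0]
    simp [cO.map_one x (hμ.mem_of_le_half x hx)]

lemma relayedContraction_one (cO : IsPointedContraction O a hO)
    (cA : IsPointedContraction A a hA) (hAO : A ⊆ O) (hμ : IsCutoff O A μ) {x : X}
    (hx : μ x ≤ 1 / 2) : relayedContraction hO hA μ (1, x) = a := by
  by_cases hxA : x ∈ A
  · simp only [relayedContraction, Icc.coe_one, cA.map_one x hxA, cO.map_base]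
  · exact relayedContraction_eq_base_of_eq_zero cO cA hAO
      (hμ.eventuallyEq_zero x hx hxA).eq_of_nhds

end Relay

section Halves

variable {U V : Set X} {a : X} {hU hV hA : X → ℝ → X} {ρ : X → ℝ}

lemma continuous_glueAtHalf_taperedContraction (cU : IsPointedContraction U a hU)
    (cV : IsPointedContraction V a hV) (ρU : IsCutoff U (U ∩ V) ρ)
    (ρV : IsCutoff V (U ∩ V) (fun x => 1 - ρ x)) :
    Continuous (glueAtHalf ρ (taperedContraction hU ρ) (taperedContraction hV fun x => 1 - ρ x)) :=
  continuous_glueAtHalf ρU.continuous (continuousOn_taperedContraction cU ρU)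
    (continuousOn_taperedContraction cV ρV) fun p hp => by
      have hp' : 1 - ρ p.2 = 1 / 2 := by rw [hp]; norm_num
      rw [taperedContraction_of_eq_half cU ρU hp, taperedContraction_of_eq_half cV ρV hp']

lemma continuous_glueAtHalf_relayedContraction (cU : IsPointedContraction U a hU)
    (cV : IsPointedContraction V a hV) (cA : IsPointedContraction (U ∩ V) a hA)
    (hUV : IsOpen (U ∩ V)) (ρU : IsCutoff U (U ∩ V) ρ)
    (ρV : IsCutoff V (U ∩ V) (fun x => 1 - ρ x)) :
    Continuous (glueAtHalf ρ (relayedContraction hU hA ρ)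
      (relayedContraction hV hA fun x => 1 - ρ x)) :=
  continuous_glueAtHalf ρU.continuous
    (continuousOn_relayedContraction cU cA inter_subset_left hUV ρU)
    (continuousOn_relayedContraction cV cA inter_subset_right hUV ρV) fun p hp => by
      have hp' : 1 - ρ p.2 = 1 / 2 := by rw [hp]; norm_num
      rw [relayedContraction_of_eq_half cU cA inter_subset_left hp,
        relayedContraction_of_eq_half cV cA inter_subset_right hp']

theorem contractibleSpace_of_isPointedContraction (cU : IsPointedContraction U a hU)
    (cV : IsPointedContraction V a hV) (cA : IsPointedContraction (U ∩ V) a hA)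
    (hUV : IsOpen (U ∩ V)) (ρU : IsCutoff U (U ∩ V) ρ)
    (ρV : IsCutoff V (U ∩ V) (fun x => 1 - ρ x)) : ContractibleSpace X := by
  set G₁ := glueAtHalf ρ (taperedContraction hU ρ) (taperedContraction hV fun x => 1 - ρ x)
  set G₂ := glueAtHalf ρ (relayedContraction hU hA ρ) (relayedContraction hV hA fun x => 1 - ρ x)
  have hG₁ : Continuous G₁ := continuous_glueAtHalf_taperedContraction cU cV ρU ρV
  have hG₂ : Continuous G₂ := continuous_glueAtHalf_relayedContraction cU cV cA hUV ρU ρV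
  let g : C(X, X) := ⟨fun x => G₁ (1, x), hG₁.comp (by fun_prop)⟩
  rw [contractible_iff_id_nullhomotopic]
  refine ⟨a, ContinuousMap.Homotopic.trans (g := g) ⟨?_⟩ ⟨?_⟩⟩
  · exact
      { toFun := G₁
        continuous_toFun := hG₁
        map_zero_left := fun x =>
          glueAtHalf_eq (taperedContraction_zero cU ρU) (taperedContraction_zero cV ρV)
        map_one_left := fun _ => rfl }
  · exact
      { toFun := G₂
        continuous_toFun := hG₂
        map_zero_left := fun x => glueAtHalf_eq_glueAtHalf rfl
          (relayedContraction_zero cU cA inter_subset_left ρU)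
          (relayedContraction_zero cV cA inter_subset_right ρV)
        map_one_left := fun x => glueAtHalf_eq (relayedContraction_one cU cA inter_subset_left ρU)
          (relayedContraction_one cV cA inter_subset_right ρV) }

end Halves

lemma exists_continuous_eventuallyEq_one_zero [NormalSpace X] {U V : Set X} (hU : IsOpen U)
    (hV : IsOpen V) (hUV : U ∪ V = univ) :
    ∃ f : C(X, ℝ), (∀ x, f x ∈ Icc (0 : ℝ) 1) ∧ (∀ x ∉ U, f =ᶠ[𝓝 x] 1) ∧
      (∀ x ∉ V, f =ᶠ[𝓝 x] 0) := by
  have hVU : Vᶜ ⊆ U := fun x hx => (hUV ▸ mem_univ x : x ∈ U ∪ V).resolve_right hx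
  obtain ⟨u, hu, hVu, huU⟩ := normal_exists_closure_subset hV.isClosed_compl hU hVU
  obtain ⟨w, hw, hUw, hwu⟩ := normal_exists_closure_subset hU.isClosed_compl
    isClosed_closure.isOpen_compl (compl_subset_compl.2 huU)
  obtain ⟨f, hf0, hf1, hf01⟩ := exists_continuous_zero_one_of_isClosed isClosed_closure
    isClosed_closure (disjoint_compl_right.mono_right hwu)
  refine ⟨f, hf01, fun x hx => ?_, fun x hx => ?_⟩
  · exact eventuallyEq_of_mem (hw.mem_nhds (hUw hx)) fun y hy => hf1 (subset_closure hy)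
  · exact eventuallyEq_of_mem (hu.mem_nhds (hVu hx)) fun y hy => hf0 (subset_closure hy)

lemma exists_compact_mem_nhds_of_homeomorph {Y : Type*} [TopologicalSpace Y]
    [WeaklyLocallyCompactSpace Y] {O : Set X} (hO : IsOpen O) (φ : O ≃ₜ Y) {x : X} (hx : x ∈ O) :
    ∃ K, IsCompact K ∧ K ∈ 𝓝 x := by
  have hι : IsOpenEmbedding (Subtype.val ∘ φ.symm) :=
    hO.isOpenEmbedding_subtypeVal.comp φ.symm.isOpenEmbedding
  obtain ⟨K, hK, hKx⟩ := exists_compact_mem_nhds (φ ⟨x, hx⟩)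
  refine ⟨_, hK.image hι.continuous, ?_⟩
  simpa [hι.map_nhds_eq] using image_mem_map (m := Subtype.val ∘ φ.symm) hKx

lemma weaklyLocallyCompactSpace_of_union_homeomorph {Y : Type*} [TopologicalSpace Y]
    [WeaklyLocallyCompactSpace Y] {U V : Set X} (hU : IsOpen U) (hV : IsOpen V)
    (hUV : U ∪ V = univ) (φU : U ≃ₜ Y) (φV : V ≃ₜ Y) : WeaklyLocallyCompactSpace X :=
  ⟨fun x => (hUV ▸ mem_univ x : x ∈ U ∪ V).elim (exists_compact_mem_nhds_of_homeomorph hU φU)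
    (exists_compact_mem_nhds_of_homeomorph hV φV)⟩

lemma sigmaCompactSpace_of_union_homeomorph {Y : Type*} [TopologicalSpace Y] [SigmaCompactSpace Y]
    {U V : Set X} (hUV : U ∪ V = univ) (φU : U ≃ₜ Y) (φV : V ≃ₜ Y) : SigmaCompactSpace X := by
  rw [← isSigmaCompact_univ_iff, ← hUV]
  simpa [Set.Sum.elim_range, range_comp] using isSigmaCompact_range
    ((continuous_subtype_val.comp φU.symm.continuous).sumElim
      (continuous_subtype_val.comp φV.symm.continuous))

lemma exists_isCutoff [NormalSpace X] {U V : Set X} (hU : IsOpen U) (hV : IsOpen V)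
    (hUV : U ∪ V = univ) :
    ∃ ρ : X → ℝ, IsCutoff U (U ∩ V) ρ ∧ IsCutoff V (U ∩ V) (fun x => 1 - ρ x) := by
  obtain ⟨f, hf01, hfU, hfV⟩ := exists_continuous_eventuallyEq_one_zero hU hV hUV
  refine ⟨f, .of_eventuallyEq f.continuous (fun x => (hf01 x).1) subset_rfl
    (fun x hx => (hfU x hx).eq_of_nhds) hfV, .of_eventuallyEq (by fun_prop)
    (fun x => sub_nonneg.2 (hf01 x).2) (fun x hx => ⟨hx.2, hx.1⟩)
    (fun x hx => by simp [(hfV x hx).eq_of_nhds]) fun x hx => ?_⟩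
  filter_upwards [hfU x hx] with y hy
  simp [hy]

end DoubleSpace

open DoubleSpace in
theorem contractible_of_double_three_space_property_general
    {M : Type*} [TopologicalSpace M] [T2Space M]
    (U V : Set M) (hUopen : IsOpen U) (hVopen : IsOpen V) (hUV : U ∪ V = Set.univ)
    (hU : Nonempty (↥U ≃ₜ EuclideanSpace ℝ (Fin 3)))
    (hV : Nonempty (↥V ≃ₜ EuclideanSpace ℝ (Fin 3)))
    (hUVinter : Nonempty (↥(U ∩ V) ≃ₜ EuclideanSpace ℝ (Fin 3))) :
    ContractibleSpace M := by
  obtain ⟨φU⟩ := hU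
  obtain ⟨φV⟩ := hV
  obtain ⟨φA⟩ := hUVinter
  have := weaklyLocallyCompactSpace_of_union_homeomorph hUopen hVopen hUV φU φV
  have := sigmaCompactSpace_of_union_homeomorph hUV φU φV
  obtain ⟨ρ, hρU, hρV⟩ := exists_isCutoff hUopen hVopen hUV
  let a : ↥(U ∩ V) := φA.symm 0
  exact contractibleSpace_of_isPointedContraction
    (isPointedContraction_lineContraction φU ⟨a, a.2.1⟩)
    (isPointedContraction_lineContraction φV ⟨a, a.2.2⟩)
    (isPointedContraction_lineContraction φA a) (hUopen.inter hVopen) hρU hρV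

/-- A nonempty Hausdorff space which is the union of two open sets `U` and `V` such that
`U`, `V`, and `U ∩ V` are each homeomorphic to Euclidean 3-space is contractible
(the double 3-space property implies contractibility). -/
theorem contractible_of_double_three_space_property
    {M : Type*} [TopologicalSpace M] [T2Space M] [Nonempty M]
    (U V : Set M) (hUopen : IsOpen U) (hVopen : IsOpen V) (hUV : U ∪ V = Set.univ)
    (hU : Nonempty (↥U ≃ₜ EuclideanSpace ℝ (Fin 3)))
    (hV : Nonempty (↥V ≃ₜ EuclideanSpace ℝ (Fin 3)))
    (hUVinter : Nonempty (↥(U ∩ V) ≃ₜ EuclideanSpace ℝ (Fin 3))) :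
    ContractibleSpace M :=
  contractible_of_double_three_space_property_general U V hUopen hVopen hUV hU hV hUVinter
end

section
/- Let X be a topological space and let K : ℕ → Set X be a sequence of subsets with Kₙ ⊆ interior(Kₙ₊₁) for every n and X = ⋃ₙ Kₙ. Suppose that for each n the inclusion map of the subspace Kₙ into the subspace Kₙ₊₁ is homotopic to a constant map. Then X is weakly contractible: if X is nonempty then X is path-connected, and for every n ≥ 1 and every basepoint x ∈ X the homotopy group πₙ(X, x) is trivial. -/
/-!
Every compact subset of `X` lies in some `Kₘ`, so a generalized loop `f : Iⁿ → X` based at `x`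
lands in some `Kₘ`, and the null-homotopy of `Kₘ ↪ Kₘ₊₁` yields a free null-homotopy `H` of `f`
which at each time `t` is constant, equal to `γ t`, on `∂Iⁿ`. Such a free null-homotopy can be
made rel `∂Iⁿ`. Let `bump : Iⁿ → I` vanish on `∂Iⁿ` and equal `1` on `[1/4, 3/4]ⁿ`. First
run `H` for time `s * bump y` on the cube stretched by the factor `1 + s` about its
centre: at `s = 1` the stretch pushes every point with `bump y < 1` onto `∂Iⁿ`, where `H` only
sees `γ`, so `f` is deformed rel `∂Iⁿ` into `γ ∘ bump`. Then contract `bump` to `0` rel `∂Iⁿ`.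
Evaluated at points of `Kₘ`, the null-homotopy joins each of them to one point, which gives
path-connectedness.
-/

open Set Topology

open scoped unitInterval Topology.Homotopy

namespace unitInterval

noncomputable def trapezoid (t : I) : I := projIcc 0 1 zero_le_one (4 * min (t : ℝ) (1 - t))

lemma continuous_trapezoid : Continuous trapezoid := by
  unfold trapezoid; fun_prop

@[simp] lemma trapezoid_zero : trapezoid 0 = 0 := by
  simp [trapezoid]

@[simp] lemma trapezoid_one : trapezoid 1 = 0 := by
  simp [trapezoid]

lemma lt_quarter_or_three_quarters_lt_of_trapezoid_lt_one {t : I} (ht : trapezoid t < 1) :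
    (t : ℝ) < 1 / 4 ∨ 3 / 4 < (t : ℝ) := by
  by_contra! h
  refine ht.ne (projIcc_of_right_le _ ?_)
  have : 1 / 4 ≤ min (t : ℝ) (1 - t) := le_min h.1 (by linarith [h.2])
  linarith

noncomputable def stretch (s t : I) : I := projIcc 0 1 zero_le_one ((1 + s) * t - s / 2)

lemma continuous_stretch : Continuous fun p : I × I => stretch p.1 p.2 := by
  unfold stretch; fun_prop

@[simp] lemma stretch_zero_left (t : I) : stretch 0 t = t := by
  simp [stretch]

@[simp] lemma stretch_zero_right (s : I) : stretch s 0 = 0 :=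
  projIcc_of_le_left _ (by simp; linarith [nonneg s])

@[simp] lemma stretch_one_right (s : I) : stretch s 1 = 1 :=
  projIcc_of_right_le _ (by simp; linarith [nonneg s])

lemma stretch_one_left_eq_zero_or_eq_one {t : I} (ht : trapezoid t < 1) :
    stretch 1 t = 0 ∨ stretch 1 t = 1 := by
  unfold stretch
  rcases lt_quarter_or_three_quarters_lt_of_trapezoid_lt_one ht with h | h
  · exact .inl (projIcc_of_le_left _ (by push_cast; linarith))
  · exact .inr (projIcc_of_right_le _ (by push_cast; linarith))

lemma homotopicRel_const_zero {Y : Type*} [TopologicalSpace Y] {S : Set Y} (φ : C(Y, I))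
    (hφ : ∀ y ∈ S, φ y = 0) : φ.HomotopicRel (ContinuousMap.const Y 0) S :=
  ⟨{ toFun := fun p => σ p.1 * φ p.2
     map_zero_left := by simp
     map_one_left := by simp
     prop' := fun t y hy => by simp [hφ y hy] }⟩

end unitInterval

namespace Cube

variable {N : Type*}

noncomputable def stretch (s : I) (y : I^N) : I^N := fun i => unitInterval.stretch s (y i)

lemma continuous_stretch : Continuous fun p : I × I^N => stretch p.1 p.2 :=
  continuous_pi fun i => unitInterval.continuous_stretch.comp
    (continuous_fst.prodMk ((continuous_apply i).comp continuous_snd))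

@[simp] lemma stretch_zero (y : I^N) : stretch 0 y = y :=
  funext fun i => unitInterval.stretch_zero_left (y i)

lemma stretch_mem_boundary (s : I) {y : I^N} (hy : y ∈ boundary N) :
    stretch s y ∈ boundary N := by
  obtain ⟨i, hi | hi⟩ := hy
  · exact ⟨i, .inl (by simp [stretch, hi])⟩
  · exact ⟨i, .inr (by simp [stretch, hi])⟩

variable [Fintype N]

noncomputable def bump : C(I^N, I) :=
  ⟨fun y => ∏ i, unitInterval.trapezoid (y i),
    continuous_finsetProd _ fun i _ => unitInterval.continuous_trapezoid.comp (continuous_apply i)⟩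

lemma bump_eq_zero {y : I^N} (hy : y ∈ boundary N) : bump y = 0 := by
  obtain ⟨i, hi | hi⟩ := hy <;>
  exact Finset.prod_eq_zero (Finset.mem_univ i) (by simp [hi])

lemma stretch_one_mem_boundary {y : I^N} (hy : bump y < 1) : stretch 1 y ∈ boundary N := by
  obtain ⟨i, -, hi⟩ : ∃ i ∈ Finset.univ, unitInterval.trapezoid (y i) ≠ 1 := by
    by_contra! h
    exact hy.ne (Finset.prod_eq_one h)
  exact ⟨i, unitInterval.stretch_one_left_eq_zero_or_eq_one (lt_of_le_of_ne le_top hi)⟩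

end Cube

section

variable {X : Type*} [TopologicalSpace X] {N : Type*}

theorem ContinuousMap.Homotopy.homotopicRel_comp_bump [Fintype N] {f : C(I^N, X)} {c : X}
    (H : f.Homotopy (ContinuousMap.const _ c))
    (hH : ∀ t, ∀ y ∈ Cube.boundary N, ∀ z ∈ Cube.boundary N, H (t, y) = H (t, z))
    {y₀ : I^N} (hy₀ : y₀ ∈ Cube.boundary N) :
    f.HomotopicRel ((H.evalAt y₀).toContinuousMap.comp Cube.bump) (Cube.boundary N) :=
  ⟨{ toFun := fun p => H (p.1 * Cube.bump p.2, Cube.stretch p.1 p.2)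
     continuous_toFun := H.continuous.comp <|
       (continuous_fst.mul (Cube.bump.continuous.comp continuous_snd)).prodMk
         Cube.continuous_stretch
     map_zero_left := fun y => by simp
     map_one_left := fun y => by
       change H (1 * Cube.bump y, _) = H (Cube.bump y, y₀)
       rw [one_mul]
       rcases (unitInterval.le_one' (t := Cube.bump y)).eq_or_lt with h | h
       · rw [h, H.apply_one, H.apply_one]; rfl
       · exact hH _ _ (Cube.stretch_one_mem_boundary h) _ hy₀
     prop' := fun t y hy => by
       simpa [Cube.bump_eq_zero hy] using hH 0 _ (Cube.stretch_mem_boundary t hy) _ hy }⟩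

theorem GenLoop.homotopic_const_of_homotopy [Fintype N] [Nonempty N] {x c : X} {f : Ω^ N X x}
    (H : (f : C(I^N, X)).Homotopy (ContinuousMap.const _ c))
    (hH : ∀ t, ∀ y ∈ Cube.boundary N, ∀ z ∈ Cube.boundary N, H (t, y) = H (t, z)) :
    GenLoop.Homotopic f GenLoop.const := by
  obtain ⟨i⟩ := ‹Nonempty N›
  have hy₀ : (fun _ => 0 : I^N) ∈ Cube.boundary N := ⟨i, .inl rfl⟩
  refine (H.homotopicRel_comp_bump hH hy₀).trans ?_
  have hbump := unitInterval.homotopicRel_const_zero (Cube.bump (N := N)) fun _ => Cube.bump_eq_zero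
  convert hbump.comp_continuousMap (H.evalAt _).toContinuousMap using 1
  ext
  exact ((H.evalAt _).source.trans (GenLoop.boundary f _ hy₀)).symm

theorem GenLoop.homotopic_const_of_nullhomotopic_inclusion [Fintype N] [Nonempty N]
    {A B : Set X} {hAB : A ⊆ B} (hnull : (ContinuousMap.inclusion hAB).Nullhomotopic)
    {x : X} (f : Ω^ N X x) (hf : range f ⊆ A) : GenLoop.Homotopic f GenLoop.const := by
  obtain ⟨c, ⟨H⟩⟩ := hnull
  refine GenLoop.homotopic_const_of_homotopy (f := f) (c := (c : X))
    { toFun := fun p => (H (p.1, ⟨f p.2, hf (mem_range_self p.2)⟩) : X)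
      continuous_toFun := by fun_prop
      map_zero_left := fun y => congrArg Subtype.val (H.apply_zero _)
      map_one_left := fun y => congrArg Subtype.val (H.apply_one _) } ?_
  intro t y hy z hz
  exact congrArg (fun a => (H (t, a) : X)) 
    (Subtype.ext ((GenLoop.boundary f y hy).trans (GenLoop.boundary f z hz).symm))

theorem HomotopyGroup.subsingleton_of_forall_homotopic_const {x : X}
    (h : ∀ f : Ω^ N X x, GenLoop.Homotopic f GenLoop.const) :
    Subsingleton (HomotopyGroup N X x) :=
  ⟨fun a b => Quotient.inductionOn₂ a b fun f g => Quotient.sound ((h f).trans (h g).symm)⟩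

theorem joined_of_nullhomotopic_inclusion {A B : Set X} {hAB : A ⊆ B}
    (hnull : (ContinuousMap.inclusion hAB).Nullhomotopic) {a b : X} (ha : a ∈ A) (hb : b ∈ A) :
    Joined a b := by
  obtain ⟨c, ⟨H⟩⟩ := hnull
  have joined_c : ∀ z ∈ A, Joined z (c : X) := fun z hz =>
    ⟨(H.evalAt ⟨z, hz⟩).map continuous_subtype_val⟩
  exact (joined_c a ha).trans (joined_c b hb).symm

theorem IsCompact.exists_subset_of_subset_interior_succ {K : ℕ → Set X}
    (hK : ∀ n, K n ⊆ interior (K (n + 1))) (hcover : ⋃ n, K n = univ) {C : Set X}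
    (hC : IsCompact C) : ∃ m, C ⊆ K m := by
  have hmono : Monotone fun n => interior (K n) :=
    monotone_nat_of_le_succ fun n => interior_mono ((hK n).trans interior_subset)
  have hC' : C ⊆ ⋃ n, interior (K n) := fun z _ => by
    obtain ⟨n, hn⟩ := mem_iUnion.mp (hcover.symm ▸ mem_univ z : z ∈ ⋃ n, K n)
    exact mem_iUnion.mpr ⟨n + 1, hK n hn⟩
  obtain ⟨m, hm⟩ := hC.elim_directed_cover _ (fun _ => isOpen_interior) hC' hmono.directed_le
  exact ⟨m, hm.trans interior_subset⟩

end

/-- If a space `X` is the union of an exhausting sequence of subsets `Kₙ` with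
`Kₙ ⊆ interior Kₙ₊₁`, and each inclusion `Kₙ ↪ Kₙ₊₁` is homotopic to a constant map,
then `X` is weakly contractible: it is path-connected (when nonempty) and all of its
homotopy groups `πₙ(X, x)` for `n ≥ 1` are trivial. -/
theorem weakly_contractible_of_exhaustion_null_inclusions
    {X : Type*} [TopologicalSpace X] (K : ℕ → Set X)
    (hK : ∀ n, K n ⊆ interior (K (n + 1)))
    (hcover : ⋃ n, K n = Set.univ)
    (hnull : ∀ n, ∃ c : ↥(K (n + 1)),
      ContinuousMap.Homotopic
        ⟨Set.inclusion ((hK n).trans interior_subset),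
          continuous_inclusion ((hK n).trans interior_subset)⟩
        (ContinuousMap.const ↥(K n) c)) :
    (Nonempty X → PathConnectedSpace X) ∧
      ∀ n : ℕ, 1 ≤ n → ∀ x : X, Subsingleton (HomotopyGroup (Fin n) X x) := by
  refine ⟨fun hX => ⟨hX, fun a b => ?_⟩, fun n hn x => ?_⟩
  · obtain ⟨m, hm⟩ :=
      (Set.toFinite {a, b}).isCompact.exists_subset_of_subset_interior_succ hK hcover
    exact joined_of_nullhomotopic_inclusion (hnull m) (hm (by simp)) (hm (by simp))
  · have : Nonempty (Fin n) := ⟨⟨0, hn⟩⟩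
    refine HomotopyGroup.subsingleton_of_forall_homotopic_const fun f => ?_
    obtain ⟨m, hm⟩ :=
      (isCompact_range f.1.continuous).exists_subset_of_subset_interior_succ hK hcover
    exact GenLoop.homotopic_const_of_nullhomotopic_inclusion (hnull m) f hm
end

section
/- Let m be a natural number and a ∈ ℝ, and suppose the closed interval [a, a + 3^{−m}] is contained in preCantorSet m. Then C ∩ [a, a + 3^{−m}] = { a + 3^{−m}·x : x ∈ C }, where C is the Cantor ternary set; that is, the increasing affine bijection from [a, a + 3^{−m}] onto [0,1] carries C ∩ [a, a + 3^{−m}] onto C. -/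
/-! A stage-`(m + 1)` set lies in `[0, 1/3] ∪ [2/3, 1]`, so a connected subset of it lies in one
of the two similar copies `x ↦ x / 3`, `x ↦ (2 + x) / 3` of the stage-`m` set. Undoing that
similarity turns `[a, a + 3⁻ᵐ⁻¹] ⊆ preCantorSet (m + 1)` into an interval of length `3⁻ᵐ` inside
`preCantorSet m`, so induction on `m` shows that `preCantorSet (n + m)` meets `[a, a + 3⁻ᵐ]` in
the rescaled copy of `preCantorSet n`; intersecting over `n` gives the claim. -/

open Set

theorem IsPreconnected.subset_or_subset_of_subset_Iio_Ioi {α : Type*} [LinearOrder α]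
    [TopologicalSpace α] [OrderClosedTopology α] {s t u : Set α} {c : α}
    (hs : IsPreconnected s) (hst : s ⊆ t ∪ u) (ht : t ⊆ Iio c) (hu : u ⊆ Ioi c) :
    s ⊆ t ∨ s ⊆ u := by
  refine (hs.subset_or_subset isOpen_Iio isOpen_Ioi Iio_disjoint_Ioi_same
    (hst.trans (union_subset_union ht hu))).imp (fun hsc ↦ ?_) (fun hsc ↦ ?_)
  · exact Disjoint.subset_left_of_subset_union hst (Iio_disjoint_Ioi_same.mono hsc hu)
  · exact Disjoint.subset_right_of_subset_union hst (Iio_disjoint_Ioi_same.mono ht hsc).symm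

theorem Set.union_inter_image_of_disjoint {α β : Type*} {f g : α → β} (hf : f.Injective)
    {s t u v : Set α} (hgf : Disjoint (g '' t) (f '' u)) (hv : v ⊆ u) :
    (f '' s ∪ g '' t) ∩ f '' v = f '' (s ∩ v) := by
  rw [union_inter_distrib_right, image_inter hf,
    (hgf.mono_right (image_mono hv)).inter_eq, union_empty]

lemma image_div_three_preCantorSet_subset_Iic (n : ℕ) :
    (· / 3) '' preCantorSet n ⊆ Iic (1 / 3 : ℝ) := by
  rintro _ ⟨x, hx, rfl⟩
  have := (preCantorSet_subset_unitInterval hx).2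
  simp only [mem_Iic]
  linarith

lemma image_two_add_div_three_preCantorSet_subset_Ici (n : ℕ) :
    (fun x ↦ (2 + x) / 3) '' preCantorSet n ⊆ Ici (2 / 3 : ℝ) := by
  rintro _ ⟨x, hx, rfl⟩
  have := (preCantorSet_subset_unitInterval hx).1
  simp only [mem_Ici]
  linarith

lemma disjoint_image_two_add_div_three_image_div_three_preCantorSet (k n : ℕ) :
    Disjoint ((fun x ↦ (2 + x) / 3) '' preCantorSet k) ((· / 3) '' preCantorSet n) :=
  (Iic_disjoint_Ici.2 (by norm_num)).symm.mono
    (image_two_add_div_three_preCantorSet_subset_Ici k) (image_div_three_preCantorSet_subset_Iic n)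

theorem IsPreconnected.subset_image_div_three_or_image_two_add_div_three {s : Set ℝ}
    (hs : IsPreconnected s) {n : ℕ} (h : s ⊆ preCantorSet (n + 1)) :
    s ⊆ (· / 3) '' preCantorSet n ∨ s ⊆ (fun x ↦ (2 + x) / 3) '' preCantorSet n :=
  hs.subset_or_subset_of_subset_Iio_Ioi (c := 1 / 2) h
    ((image_div_three_preCantorSet_subset_Iic n).trans (Iic_subset_Iio.2 (by norm_num)))
    ((image_two_add_div_three_preCantorSet_subset_Ici n).trans (Ici_subset_Ioi.2 (by norm_num)))

lemma div_three_injective : Function.Injective (· / 3 : ℝ → ℝ) :=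
  fun x y h ↦ by simpa using h

lemma two_add_div_three_injective : Function.Injective (fun x : ℝ ↦ (2 + x) / 3) :=
  fun x y h ↦ by simpa using h

theorem preCantorSet_add_inter_image_Icc (m : ℕ) {a : ℝ}
    (h : (fun x ↦ a + (1 / 3 : ℝ) ^ m * x) '' Icc 0 1 ⊆ preCantorSet m) (n : ℕ) :
    preCantorSet (n + m) ∩ (fun x ↦ a + (1 / 3 : ℝ) ^ m * x) '' Icc 0 1 =
      (fun x ↦ a + (1 / 3 : ℝ) ^ m * x) '' preCantorSet n := by
  induction m generalizing a with
  | zero =>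
    obtain rfl : a = 0 := by
      have h0 := h (mem_image_of_mem _ (left_mem_Icc.2 zero_le_one))
      have h1 := h (mem_image_of_mem _ (right_mem_Icc.2 zero_le_one))
      simp only [preCantorSet_zero, mem_Icc] at h0 h1
      linarith
    simp [preCantorSet_subset_unitInterval]
  | succ m ih =>
    have hconn : IsPreconnected ((fun x ↦ a + (1 / 3 : ℝ) ^ (m + 1) * x) '' Icc 0 1) :=
      isPreconnected_Icc.image _ (by fun_prop)
    rw [← add_assoc, preCantorSet_succ]
    rcases hconn.subset_image_div_three_or_image_two_add_div_three h with hL | hR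
    · have hcomp : (fun x ↦ a + (1 / 3 : ℝ) ^ (m + 1) * x) =
          (· / 3) ∘ fun x ↦ 3 * a + (1 / 3 : ℝ) ^ m * x := by
        funext x; simp only [Function.comp]; ring
      rw [hcomp, image_comp] at hL
      rw [hcomp, image_comp, image_comp]
      have hsub := (image_subset_image_iff div_three_injective).1 hL
      rw [union_inter_image_of_disjoint div_three_injective
        (disjoint_image_two_add_div_three_image_div_three_preCantorSet _ _) hsub, ih hsub]
    · have hcomp : (fun x ↦ a + (1 / 3 : ℝ) ^ (m + 1) * x) =
          (fun x ↦ (2 + x) / 3) ∘ fun x ↦ (3 * a - 2) + (1 / 3 : ℝ) ^ m * x := by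
        funext x; simp only [Function.comp]; ring
      rw [hcomp, image_comp] at hR
      rw [hcomp, image_comp, image_comp]
      have hsub := (image_subset_image_iff two_add_div_three_injective).1 hR
      rw [union_comm, union_inter_image_of_disjoint two_add_div_three_injective
        (disjoint_image_two_add_div_three_image_div_three_preCantorSet _ _).symm hsub, ih hsub]

/-- Self-similarity of the Cantor ternary set under rescaling of a retained stage-`m`
interval: if the closed interval `[a, a + 3⁻ᵐ]` is contained in `preCantorSet m`, then
the part of the Cantor set in this interval is exactly the image of the Cantor set under
the increasing affine map `x ↦ a + 3⁻ᵐ x` from `[0,1]` onto `[a, a + 3⁻ᵐ]`. -/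
theorem cantorSet_inter_stage_interval (m : ℕ) (a : ℝ)
    (h : Set.Icc a (a + (1/3 : ℝ) ^ m) ⊆ preCantorSet m) :
    cantorSet ∩ Set.Icc a (a + (1/3 : ℝ) ^ m) =
      (fun x => a + (1/3 : ℝ) ^ m * x) '' cantorSet := by
  set φ : ℝ → ℝ := fun x ↦ a + (1 / 3 : ℝ) ^ m * x
  have hφ : Function.Injective φ :=
    (add_right_injective a).comp (mul_right_injective₀ (by positivity))
  have hI : Icc a (a + (1 / 3 : ℝ) ^ m) = φ '' Icc 0 1 := by
    rw [show φ = ((1 / 3 : ℝ) ^ m * · + a) from funext fun x ↦ add_comm _ _,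
      image_affine_Icc' (by positivity)]
    simp [add_comm]
  rw [hI] at h ⊢
  calc cantorSet ∩ φ '' Icc 0 1 = ⋂ n, (preCantorSet (n + m) ∩ φ '' Icc 0 1) := by
        rw [cantorSet, ← preCantorSet_antitone.iInter_nat_add m, iInter_inter]
    _ = ⋂ n, φ '' preCantorSet n :=
        iInter_congr (preCantorSet_add_inter_image_Icc m h)
    _ = φ '' cantorSet := hφ.injOn.image_iInter_eq.symm
end
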